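/- arXiv:1605.02641 — 10 statements merged into one kernel-verified Lean document; each statement's English description precedes it below -/
import Mathlib

section
/- Let R be a unital associative ℂ-algebra (not necessarily commutative), and let a, i be finite index types. Let E be a square matrix over R with 2×2 block decomposition E = [[E_aa, E_ai],[E_ia, E_ii]] with respect to a ⊕ i. Assume: (1) 1 + (i/2)E is invertible, and let V = (1 − (i/2)E)(1 + (i/2)E)⁻¹ be its Cayley transform, with blocks V = [[V_aa, V_ai],[V_ia, V_ii]]; (2) E_ii is invertible; (3) I_i − V_ii is invertible. Then, writing E^fb = E_aa − E_ai E_ii⁻¹ E_ia for the Schur complement of E shortening i, the matrix I_a + (i/2)E^fb is invertible, and the feedback reduction V^fb = V_aa + V_ai (I_i − V_ii)⁻¹ V_ia equals the Cayley transform of E^fb, i.e. V^fb = (I_a − (i/2)E^fb)(I_a + (i/2)E^fb)⁻¹. -/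
open Matrix

set_option maxHeartbeats 1000000 in
/-- Feedback reduction of the Cayley transform of a Stratonovich
generator matrix `E` (over a unital associative ℂ-algebra `R`, blocks indexed
by `a ⊕ i`) is the Cayley transform of the Schur complement of `E` shortening `i`. -/
theorem stratonovich_feedback_cayley
    {R : Type*} [Ring R] [Algebra ℂ R]
    {a i : Type*} [Fintype a] [Fintype i] [DecidableEq a] [DecidableEq i]
    (E : Matrix (a ⊕ i) (a ⊕ i) R)
    [Invertible (1 + (Complex.I / 2) • E)]
    (V : Matrix (a ⊕ i) (a ⊕ i) R)
    (hV : V = (1 - (Complex.I / 2) • E) * ⅟(1 + (Complex.I / 2) • E))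
    [Invertible E.toBlocks₂₂]
    [Invertible (1 - V.toBlocks₂₂)]
    (Efb : Matrix a a R)
    (hEfb : Efb = E.toBlocks₁₁ - E.toBlocks₁₂ * ⅟E.toBlocks₂₂ * E.toBlocks₂₁) :
    IsUnit (1 + (Complex.I / 2) • Efb) ∧
      V.toBlocks₁₁ + V.toBlocks₁₂ * ⅟(1 - V.toBlocks₂₂) * V.toBlocks₂₁ =
        (1 - (Complex.I / 2) • Efb) * Ring.inverse (1 + (Complex.I / 2) • Efb) := by
  have hc0 : (Complex.I / 2 : ℂ) ≠ 0 := by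
    simp [Complex.I_ne_zero]
  set W : Matrix (a ⊕ i) (a ⊕ i) R := ⅟(1 + (Complex.I / 2) • E) with hWdef
  set E11 := E.toBlocks₁₁ with hE11
  set E12 := E.toBlocks₁₂ with hE12
  set E21 := E.toBlocks₂₁ with hE21
  set W11 := W.toBlocks₁₁ with hW11
  set W12 := W.toBlocks₁₂ with hW12
  set W21 := W.toBlocks₂₁ with hW21
  set W22 := W.toBlocks₂₂ with hW22
  have hEb : E = fromBlocks E11 E12 E21 E.toBlocks₂₂ := (fromBlocks_toBlocks E).symm
  have hWb : W = fromBlocks W11 W12 W21 W22 := (fromBlocks_toBlocks W).symm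
  have hM : (1 + (Complex.I / 2) • E)
      = fromBlocks (1 + (Complex.I / 2) • E11) ((Complex.I / 2) • E12)
          ((Complex.I / 2) • E21) (1 + (Complex.I / 2) • E.toBlocks₂₂) := by
    rw [hEb, fromBlocks_smul, ← fromBlocks_one, fromBlocks_add]
    simp
  -- block equations from M * W = 1
  have hMW : (1 + (Complex.I / 2) • E) * W = 1 := mul_invOf_self _
  rw [hM, hWb, fromBlocks_multiply, ← fromBlocks_one] at hMW
  obtain ⟨h1, h2, h3, h4⟩ := fromBlocks_inj.mp hMW
  have hWM : W * (1 + (Complex.I / 2) • E) = 1 := invOf_mul_self _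
  rw [hM, hWb, fromBlocks_multiply, ← fromBlocks_one] at hWM
  obtain ⟨h1', h2', h3', h4'⟩ := fromBlocks_inj.mp hWM
  -- V = W + W - 1
  have hEWW : ((Complex.I / 2 : ℂ) • E) * W = 1 - W := by
    have h := mul_invOf_self (1 + (Complex.I / 2 : ℂ) • E)
    rw [add_mul, one_mul] at h
    rw [← h]; abel
  have hV2 : V = W + W - 1 := by
    rw [hV, sub_mul, one_mul, hEWW]; abel
  -- blocks of V
  have hV11 : V.toBlocks₁₁ = W11 + W11 - 1 := by
    rw [hV2]
    ext x y
    simp [hW11, Matrix.toBlocks₁₁, Matrix.one_apply, Matrix.sub_apply, Matrix.add_apply]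
  have hV12 : V.toBlocks₁₂ = W12 + W12 := by
    rw [hV2]
    ext x y
    simp [hW12, Matrix.toBlocks₁₂, Matrix.one_apply, Matrix.sub_apply, Matrix.add_apply]
  have hV21 : V.toBlocks₂₁ = W21 + W21 := by
    rw [hV2]
    ext x y
    simp [hW21, Matrix.toBlocks₂₁, Matrix.one_apply, Matrix.sub_apply, Matrix.add_apply]
  have hV22 : V.toBlocks₂₂ = W22 + W22 - 1 := by
    rw [hV2]
    ext x y
    simp [hW22, Matrix.toBlocks₂₂, Matrix.one_apply, Matrix.sub_apply, Matrix.add_apply]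
  have h2W : (1 - V.toBlocks₂₂) = (2 : ℂ) • (1 - W22) := by
    rw [hV22, two_smul]; abel
  set K : Matrix i i R := (2 : ℂ) • ⅟(1 - V.toBlocks₂₂) with hKdef
  have hK1 : (1 - W22) * K = 1 := by
    rw [hKdef, mul_smul_comm, ← smul_mul_assoc, ← h2W, mul_invOf_self]
  have hK2 : K * (1 - W22) = 1 := by
    rw [hKdef, smul_mul_assoc, ← mul_smul_comm, ← h2W, invOf_mul_self]

  set U : Matrix i a R := K * W21 with hUdef
  set T : Matrix a i R := W12 * K with hTdef
  have hU1 : W21 = U - W22 * U := by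
    have h : (1 - W22) * U = W21 := by
      rw [hUdef, ← Matrix.mul_assoc, hK1, Matrix.one_mul]
    rw [← h, Matrix.sub_mul, Matrix.one_mul]
  have hT1 : W12 = T - T * W22 := by
    have h : T * (1 - W22) = W12 := by
      rw [hTdef, Matrix.mul_assoc, hK2, Matrix.mul_one]
    rw [← h, Matrix.mul_sub, Matrix.mul_one]
  set Z : Matrix a a R := W11 + W12 * U with hZdef
  have hZ' : Z = W11 + T * W21 := by rw [hZdef, hUdef, hTdef, Matrix.mul_assoc]
  rw [hU1] at h1 h3
  rw [hT1] at h1' h2'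
  have r1 : (1 + (Complex.I / 2) • E11) * Z + ((Complex.I / 2 : ℂ) • E12) * U = 1 := by
    calc (1 + (Complex.I / 2) • E11) * Z + ((Complex.I / 2 : ℂ) • E12) * U
        = ((1 + (Complex.I / 2) • E11) * W11 + (Complex.I / 2 : ℂ) • E12 * (U - W22 * U))
          + ((1 + (Complex.I / 2) • E11) * W12 + (Complex.I / 2 : ℂ) • E12 * W22) * U := by
          rw [hZdef]
          simp only [Matrix.add_mul, Matrix.mul_add, Matrix.sub_mul, Matrix.mul_sub,
            Matrix.smul_mul, Matrix.mul_smul, smul_add, smul_sub, Matrix.mul_assoc,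
            Matrix.one_mul, Matrix.mul_one]
          abel
      _ = 1 + (0 : Matrix a i R) * U := by rw [h1, h2]
      _ = 1 := by rw [Matrix.zero_mul, add_zero]
  have r2 : ((Complex.I / 2 : ℂ) • E21) * Z + (1 + (Complex.I / 2) • E.toBlocks₂₂) * U = U := by
    calc ((Complex.I / 2 : ℂ) • E21) * Z + (1 + (Complex.I / 2) • E.toBlocks₂₂) * U
        = ((Complex.I / 2 : ℂ) • E21 * W11 + (1 + (Complex.I / 2) • E.toBlocks₂₂) * (U - W22 * U))
          + ((Complex.I / 2 : ℂ) • E21 * W12 + (1 + (Complex.I / 2) • E.toBlocks₂₂) * W22) * U := by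
          rw [hZdef]
          simp only [Matrix.add_mul, Matrix.mul_add, Matrix.sub_mul, Matrix.mul_sub,
            Matrix.smul_mul, Matrix.mul_smul, smul_add, smul_sub, Matrix.mul_assoc,
            Matrix.one_mul, Matrix.mul_one]
          abel
      _ = 0 + (1 : Matrix i i R) * U := by rw [h3, h4]
      _ = U := by rw [Matrix.one_mul, zero_add]
  have s1 : E21 * Z + E.toBlocks₂₂ * U = 0 := by
    have h : (Complex.I / 2 : ℂ) • (E21 * Z + E.toBlocks₂₂ * U) = 0 := by
      calc (Complex.I / 2 : ℂ) • (E21 * Z + E.toBlocks₂₂ * U)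
          = (((Complex.I / 2 : ℂ) • E21) * Z + (1 + (Complex.I / 2) • E.toBlocks₂₂) * U) - U := by
            simp only [Matrix.add_mul, Matrix.smul_mul, smul_add, Matrix.one_mul]
            abel
        _ = 0 := by rw [r2]; abel
    have h2z := congrArg (fun X : Matrix i a R => (Complex.I / 2 : ℂ)⁻¹ • X) h
    simpa only [inv_smul_smul₀ hc0, smul_zero] using h2z
  have hUval : U = -(⅟E.toBlocks₂₂ * (E21 * Z)) := by
    have h5 : E.toBlocks₂₂ * U = -(E21 * Z) := by
      have h := s1
      rwa [add_comm, add_eq_zero_iff_eq_neg] at h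
    calc U = ⅟E.toBlocks₂₂ * (E.toBlocks₂₂ * U) := by rw [← Matrix.mul_assoc, invOf_mul_self, Matrix.one_mul]
      _ = -(⅟E.toBlocks₂₂ * (E21 * Z)) := by rw [h5, Matrix.mul_neg]
  have hZ1 : (1 + (Complex.I / 2) • Efb) * Z = 1 := by
    have heq : (1 + (Complex.I / 2) • Efb) * Z
        = (1 + (Complex.I / 2) • E11) * Z + ((Complex.I / 2 : ℂ) • E12) * U := by
      rw [hEfb, hUval]
      simp only [smul_sub, Matrix.add_mul, Matrix.sub_mul, Matrix.one_mul, Matrix.smul_mul,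
        Matrix.mul_neg, Matrix.neg_mul, smul_neg, Matrix.mul_assoc]
      abel
    rw [heq, r1]
  -- left-inverse relations
  have l1 : Z * (1 + (Complex.I / 2) • E11) + T * ((Complex.I / 2 : ℂ) • E21) = 1 := by
    calc Z * (1 + (Complex.I / 2) • E11) + T * ((Complex.I / 2 : ℂ) • E21)
        = (W11 * (1 + (Complex.I / 2) • E11) + (T - T * W22) * ((Complex.I / 2 : ℂ) • E21))
          + T * (W21 * (1 + (Complex.I / 2) • E11) + W22 * ((Complex.I / 2 : ℂ) • E21)) := by
          rw [hZ']
          simp only [Matrix.add_mul, Matrix.mul_add, Matrix.sub_mul, Matrix.mul_sub,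
            Matrix.smul_mul, Matrix.mul_smul, smul_add, smul_sub, Matrix.mul_assoc,
            Matrix.one_mul, Matrix.mul_one]
          abel
      _ = 1 + T * (0 : Matrix i a R) := by rw [h1', h3']
      _ = 1 := by rw [Matrix.mul_zero, add_zero]
  have l2 : Z * ((Complex.I / 2 : ℂ) • E12) + T * (1 + (Complex.I / 2) • E.toBlocks₂₂) = T := by
    calc Z * ((Complex.I / 2 : ℂ) • E12) + T * (1 + (Complex.I / 2) • E.toBlocks₂₂)
        = (W11 * ((Complex.I / 2 : ℂ) • E12) + (T - T * W22) * (1 + (Complex.I / 2) • E.toBlocks₂₂))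
          + T * (W21 * ((Complex.I / 2 : ℂ) • E12) + W22 * (1 + (Complex.I / 2) • E.toBlocks₂₂)) := by
          rw [hZ']
          simp only [Matrix.add_mul, Matrix.mul_add, Matrix.sub_mul, Matrix.mul_sub,
            Matrix.smul_mul, Matrix.mul_smul, smul_add, smul_sub, Matrix.mul_assoc,
            Matrix.one_mul, Matrix.mul_one]
          abel
      _ = 0 + T * (1 : Matrix i i R) := by rw [h2', h4']
      _ = T := by rw [Matrix.mul_one, zero_add]
  have s2 : Z * E12 + T * E.toBlocks₂₂ = 0 := by
    have h : (Complex.I / 2 : ℂ) • (Z * E12 + T * E.toBlocks₂₂) = 0 := by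
      calc (Complex.I / 2 : ℂ) • (Z * E12 + T * E.toBlocks₂₂)
          = (Z * ((Complex.I / 2 : ℂ) • E12) + T * (1 + (Complex.I / 2) • E.toBlocks₂₂)) - T := by
            simp only [Matrix.mul_add, Matrix.mul_smul, smul_add, Matrix.mul_one]
            abel
        _ = 0 := by rw [l2]; abel
    have h2z := congrArg (fun X : Matrix a i R => (Complex.I / 2 : ℂ)⁻¹ • X) h
    simpa only [inv_smul_smul₀ hc0, smul_zero] using h2z
  have hTval : T = -(Z * E12 * ⅟E.toBlocks₂₂) := by
    have h5 : T * E.toBlocks₂₂ = -(Z * E12) := by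
      have h := s2
      rwa [add_comm, add_eq_zero_iff_eq_neg] at h
    calc T = T * E.toBlocks₂₂ * ⅟E.toBlocks₂₂ := by rw [Matrix.mul_assoc, mul_invOf_self, Matrix.mul_one]
      _ = -(Z * E12 * ⅟E.toBlocks₂₂) := by rw [h5, Matrix.neg_mul]
  have hZ2 : Z * (1 + (Complex.I / 2) • Efb) = 1 := by
    have heq : Z * (1 + (Complex.I / 2) • Efb)
        = Z * (1 + (Complex.I / 2) • E11) + T * ((Complex.I / 2 : ℂ) • E21) := by
      rw [hEfb, hTval]
      simp only [smul_sub, Matrix.mul_add, Matrix.mul_sub, Matrix.mul_one, Matrix.mul_smul,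
        Matrix.mul_neg, Matrix.neg_mul, smul_neg, Matrix.mul_assoc]
      abel
    rw [heq, l1]
  -- assemble
  letI : Invertible (1 + (Complex.I / 2) • Efb) := ⟨Z, hZ2, hZ1⟩
  refine ⟨isUnit_of_invertible _, ?_⟩
  have hRinv : Ring.inverse (1 + (Complex.I / 2) • Efb) = Z := by
    rw [Ring.inverse_invertible]; rfl
  rw [hRinv]
  have hinvX : ⅟(1 - V.toBlocks₂₂) = ((2 : ℂ)⁻¹) • K := by
    rw [hKdef, smul_smul]
    norm_num
  have hLHS : V.toBlocks₁₁ + V.toBlocks₁₂ * ⅟(1 - V.toBlocks₂₂) * V.toBlocks₂₁ = Z + Z - 1 := by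
    rw [hV11, hV12, hV21, hinvX, hZdef, hUdef]
    simp only [Matrix.add_mul, Matrix.mul_add, Matrix.sub_mul, Matrix.mul_sub,
      Matrix.smul_mul, Matrix.mul_smul, smul_add, smul_sub, Matrix.mul_assoc,
      Matrix.one_mul, Matrix.mul_one, smul_smul]
    module
  have hRHS : (1 - (Complex.I / 2) • Efb) * Z = Z + Z - 1 := by
    have : (1 - (Complex.I / 2) • Efb) * Z
        = Z + Z - (1 + (Complex.I / 2) • Efb) * Z := by
      simp only [Matrix.add_mul, Matrix.sub_mul, Matrix.one_mul]
      abel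
    rw [this, hZ1]
  rw [hLHS, hRHS]
end

section
/- Let H be a complex Hilbert space and let e, i be finite index types with k = e ⊕ i. Let E_00 be a bounded operator on H, E_0e, E_0i rows, E_e0, E_i0 columns, and E_ee, E_ei, E_ie, E_ii block matrices of bounded operators on H, satisfying the self-adjointness relations (E_αβ)* = E_βα for all labels α, β ∈ {0} ∪ e ∪ i. Write E_kk = [[E_ee, E_ei],[E_ie, E_ii]], E_k0 = [E_e0; E_i0], E_0k = [E_0e, E_0i]. Assume I_k + (i/2)E_kk is invertible and define the SLH parameters S_kk = (I_k + (i/2)E_kk)⁻¹(I_k − (i/2)E_kk) with blocks [[S_ee, S_ei],[S_ie, S_ii]], L_k = −i(I_k + (i/2)E_kk)⁻¹ E_k0 with blocks [L_e; L_i], and H_op = E_00 + (1/2)·Im{E_0k (I_k + (i/2)E_kk)⁻¹ E_k0}, where Im X = (X − X*)/(2i). Assume further that E_ii is invertible, I_i − S_ii is invertible, and that I_e + (i/2)E^fb_ee is invertible, where E^fb_00 = E_00 − E_0i E_ii⁻¹ E_i0, E^fb_0e = E_0e − E_0i E_ii⁻¹ E_ie, E^fb_e0 = E_e0 − E_ei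 E_ii⁻¹ E_i0, E^fb_ee = E_ee − E_ei E_ii⁻¹ E_ie are the blocks of the Schur complement of the full Stratonovich matrix shortening i. Then the feedback-reduced SLH parameters satisfy: (a) S_ee + S_ei (I_i − S_ii)⁻¹ S_ie = (I_e + (i/2)E^fb_ee)⁻¹(I_e − (i/2)E^fb_ee); (b) L_e + S_ei (I_i − S_ii)⁻¹ L_i = −i(I_e + (i/2)E^fb_ee)⁻¹ E^fb_e0; (c) H_op + Im{L_e* S_ei (I_i − S_ii)⁻¹ L_i} + Im{L_i* S_ii (I_i − S_ii)⁻¹ L_i} = E^fb_00 + (1/2)·Im{E^fb_0e (I_e + (i/2)E^fb_ee)⁻¹ E^fb_e0}. -/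
open Matrix

/-- `Im X = (X − X*)/(2i)` for an operator (or element of a star ℂ-module). -/
noncomputable def imPart {A : Type*} [AddCommGroup A] [Module ℂ A] [StarAddMonoid A]
    (X : A) : A :=
  ((2 * Complex.I)⁻¹ : ℂ) • (X - star X)

/-!
Write `A = 1 + (i/2)E`, `B = A⁻¹`, so that `S = B(1 - (i/2)E) = 2B - 1`, and let `P` be the
projection onto the internal block. Every feedback formula can be read off from the matrix
`C = (1 + (1 + S) Ŵ) B`, where `Ŵ` is `(1 - S_ii)⁻¹` placed in the internal corner, and a
resolvent computation shows `C = (A - P)⁻¹`. The internal corner of `A - P` is `(i/2)E_ii`, so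
the block-inversion formula expresses `C` through the Schur complement
`1 + (i/2)(E_ee - E_ei E_ii⁻¹ E_ie) = 1 + (i/2)E^fb_ee`, which gives `S^fb` and `L^fb`.
For the Hamiltonian, self-adjointness of `E` gives `B* S = B`, so the feedback correction is
`Im(x B Ŵ B x*)` with `x = E_0k`, and `H^fb = E_00 + ½ Im(x C x*)`. The Schur form of `C` splits
`x C x*` into the reduced quadratic form plus `-2i E_0i E_ii⁻¹ E_i0`, whose imaginary part is the
correction `-E_0i E_ii⁻¹ E_i0` in `E^fb_00`.
-/

section ImPart

variable {A : Type*} [AddCommGroup A] [Module ℂ A] [StarAddMonoid A]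

theorem imPart_add (X Y : A) : imPart (X + Y) = imPart X + imPart Y := by
  rw [imPart, imPart, imPart, star_add, ← smul_add, add_sub_add_comm]

theorem imPart_smul_of_isSelfAdjoint [StarModule ℂ A] (z : ℂ) {Y : A} (hY : IsSelfAdjoint Y) :
    imPart (z • Y) = (z.im : ℂ) • Y := by
  rw [imPart, star_smul, hY.star_eq, ← sub_smul, smul_smul, Complex.star_def, Complex.sub_conj]
  congr 1
  field_simp
  push_cast
  ring

end ImPart

theorem invOf_mul_one_sub {M : Type*} [Ring M] (X : M) [Invertible (1 + X)] :
    ⅟(1 + X) * (1 - X) = 2 • ⅟(1 + X) - 1 := by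
  have h : 1 - X = 2 • 1 - (1 + X) := by rw [two_nsmul]; abel
  rw [h, mul_sub, mul_smul_comm, mul_one, invOf_mul_self]

theorem star_invOf_mul_invOf_mul_one_sub_smul {M : Type*} [Ring M] [StarRing M] [Algebra ℂ M]
    [StarModule ℂ M] {X : M} (hX : IsSelfAdjoint X) [Invertible (1 + (Complex.I / 2) • X)] :
    star (⅟(1 + (Complex.I / 2) • X)) * (⅟(1 + (Complex.I / 2) • X) * (1 - (Complex.I / 2) • X)) =
      ⅟(1 + (Complex.I / 2) • X) := by
  have hstar : star (1 + (Complex.I / 2) • X) = 1 - (Complex.I / 2) • X := by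
    rw [star_add, star_one, star_smul, hX.star_eq, Complex.star_def, map_div₀, Complex.conj_I,
      map_ofNat, neg_div, neg_smul, sub_eq_add_neg]
  have hcomm : Commute (1 + (Complex.I / 2) • X) (1 - (Complex.I / 2) • X) :=
    (Commute.one_right _).sub_right ((Commute.one_left _).add_left (Commute.refl _))
  rw [hcomm.invOf_left.eq, ← mul_assoc, ← hstar, ← star_mul, mul_invOf_self, star_one, one_mul]

section Resolvent

variable {M : Type*} [Ring M] {A B S P Z : M}

theorem sub_mul_resolvent_eq_one (hAB : A * B = 1) (hS : S = 2 • B - 1) (hPZ : P * Z = Z)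
    (hZ : (P - P * S * P) * Z = P) : (A - P) * ((1 + (1 + S) * Z) * B) = 1 := by
  have hAS : A * (1 + S) = 2 • 1 := by rw [hS, add_sub_cancel, mul_smul_comm, hAB]
  have hPSZ : P * (1 + S) * Z = 2 • Z - P := by
    rw [sub_mul, mul_assoc (P * S), hPZ] at hZ
    rw [mul_add, mul_one, add_mul, hPZ, eq_sub_of_add_eq' (sub_eq_iff_eq_add.mp hZ).symm,
      two_nsmul]
    abel
  calc (A - P) * ((1 + (1 + S) * Z) * B)
      = A * B + A * (1 + S) * Z * B - P * B - P * (1 + S) * Z * B := by noncomm_ring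
    _ = 1 := by rw [hAB, hAS, hPSZ, smul_mul_assoc, one_mul, sub_mul, smul_mul_assoc]; abel

theorem resolvent_mul_sub_eq_one (hBA : B * A = 1) (hS : S = 2 • B - 1) (hZP : Z * P = Z)
    (hZ : Z * (P - P * S * P) = P) : ((1 + (1 + S) * Z) * B) * (A - P) = 1 := by
  have h2B : 1 + S = 2 • B := by rw [hS, add_sub_cancel]
  have hZSP : Z * (1 + S) * P = 2 • Z - P := by
    rw [mul_sub, hZP, ← mul_assoc, ← mul_assoc, hZP] at hZ
    rw [mul_add, mul_one, add_mul, hZP, eq_sub_of_add_eq' (sub_eq_iff_eq_add.mp hZ).symm,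
      two_nsmul]
    abel
  calc ((1 + (1 + S) * Z) * B) * (A - P)
      = B * A + (1 + S) * Z * (B * A) - B * P - B * (Z * (2 • B) * P) := by
        rw [h2B]; simp only [smul_mul_assoc, mul_smul_comm]; noncomm_ring
    _ = 1 := by
        rw [hBA, ← h2B, hZSP, mul_one, h2B, smul_mul_assoc, mul_sub, mul_smul_comm]
        abel

end Resolvent

section Schur

variable {R : Type*} [Ring R] {m n : Type*} [Fintype m] [Fintype n]

theorem fromBlocks_schur_mulVec (G : Matrix m m R) (K : Matrix m n R) (J : Matrix n m R)
    (D : Matrix n n R) (y₁ : m → R) (y₂ : n → R) :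
    fromBlocks G (-(G * K)) (-(J * G)) (D + J * G * K) *ᵥ Sum.elim y₁ y₂ =
      Sum.elim (G *ᵥ (y₁ - K *ᵥ y₂)) (D *ᵥ y₂ - J *ᵥ (G *ᵥ (y₁ - K *ᵥ y₂))) := by
  rw [fromBlocks_mulVec, Sum.elim_comp_inl, Sum.elim_comp_inr]
  congr 1
  · simp only [mulVec_sub, mulVec_mulVec, neg_mulVec]
    abel
  · simp only [mulVec_sub, mulVec_mulVec, neg_mulVec, add_mulVec, Matrix.mul_assoc]
    abel

theorem sumElim_dotProduct_fromBlocks_schur_mulVec (G : Matrix m m R) (K : Matrix m n R)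
    (J : Matrix n m R) (D : Matrix n n R) (x₁ y₁ : m → R) (x₂ y₂ : n → R) :
    Sum.elim x₁ x₂ ⬝ᵥ fromBlocks G (-(G * K)) (-(J * G)) (D + J * G * K) *ᵥ Sum.elim y₁ y₂ =
      (x₁ - x₂ ᵥ* J) ⬝ᵥ G *ᵥ (y₁ - K *ᵥ y₂) + x₂ ⬝ᵥ D *ᵥ y₂ := by
  rw [fromBlocks_schur_mulVec, sumElim_dotProduct_sumElim, dotProduct_sub, sub_dotProduct,
    dotProduct_mulVec x₂ J]
  abel

variable [DecidableEq m] [DecidableEq n] {a : Matrix m m R} {b : Matrix m n R}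
  {c : Matrix n m R} {d D : Matrix n n R} {C : Matrix (m ⊕ n) (m ⊕ n) R}

theorem toBlocks₂₁_eq_of_fromBlocks_mul_eq_one (hMC : fromBlocks a b c d * C = 1)
    (hDd : D * d = 1) : C.toBlocks₂₁ = -(D * c * C.toBlocks₁₁) := by
  rw [← fromBlocks_toBlocks C, fromBlocks_multiply, ← fromBlocks_one, fromBlocks_inj] at hMC
  have h := congrArg (D * ·) hMC.2.2.1
  simp only [Matrix.mul_add, Matrix.mul_zero, ← Matrix.mul_assoc, hDd, Matrix.one_mul] at h
  exact eq_neg_of_add_eq_zero_right h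

theorem schur_mul_toBlocks₁₁_eq_one (hMC : fromBlocks a b c d * C = 1) (hDd : D * d = 1) :
    (a - b * D * c) * C.toBlocks₁₁ = 1 := by
  have h21 := toBlocks₂₁_eq_of_fromBlocks_mul_eq_one hMC hDd
  rw [← fromBlocks_toBlocks C, fromBlocks_multiply, ← fromBlocks_one, fromBlocks_inj] at hMC
  rw [← hMC.1, h21, Matrix.sub_mul, Matrix.mul_neg, sub_eq_add_neg]
  simp only [Matrix.mul_assoc]

theorem eq_fromBlocks_schur_of_mul_eq_one (hMC : fromBlocks a b c d * C = 1)
    (hCM : C * fromBlocks a b c d = 1) (hDd : D * d = 1) (hdD : d * D = 1) :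
    C = fromBlocks C.toBlocks₁₁ (-(C.toBlocks₁₁ * (b * D))) (-(D * c * C.toBlocks₁₁))
      (D + D * c * C.toBlocks₁₁ * (b * D)) := by
  have h21 := toBlocks₂₁_eq_of_fromBlocks_mul_eq_one hMC hDd
  rw [← fromBlocks_toBlocks C, fromBlocks_multiply, ← fromBlocks_one, fromBlocks_inj] at hMC hCM
  have h12 : C.toBlocks₁₂ = -(C.toBlocks₁₁ * (b * D)) := by
    have h := congrArg (· * D) hCM.2.1
    simp only [Matrix.add_mul, Matrix.zero_mul, Matrix.mul_assoc, hdD, Matrix.mul_one] at h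
    exact eq_neg_of_add_eq_zero_right h
  have h22 : C.toBlocks₂₂ = D + D * c * C.toBlocks₁₁ * (b * D) := by
    have h := congrArg (D * ·) hMC.2.2.2
    simp only [Matrix.mul_add, Matrix.mul_one, ← Matrix.mul_assoc, hDd, Matrix.one_mul] at h
    rw [eq_sub_of_add_eq' h, h12]
    simp only [Matrix.mul_neg, sub_neg_eq_add, Matrix.mul_assoc]
  conv_lhs => rw [← fromBlocks_toBlocks C, h12, h21, h22]

end Schur

section Feedback

variable {R : Type*} [Ring R] {m n : Type*} [Fintype m] [Fintype n]

theorem dotProduct_mul_fromBlocks_mulVec (S : Matrix (m ⊕ n) (m ⊕ n) R) (W : Matrix n n R)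
    (u v : m ⊕ n → R) :
    u ⬝ᵥ (S * fromBlocks 0 0 0 W) *ᵥ v =
      (fun j => u (Sum.inl j)) ⬝ᵥ (S.toBlocks₁₂ * W) *ᵥ (fun j => v (Sum.inr j)) +
        (fun j => u (Sum.inr j)) ⬝ᵥ (S.toBlocks₂₂ * W) *ᵥ (fun j => v (Sum.inr j)) := by
  conv_lhs => rw [← fromBlocks_toBlocks S, fromBlocks_multiply, fromBlocks_mulVec,
    ← Sum.elim_comp_inl_inr u, sumElim_dotProduct_sumElim]
  simp only [Matrix.mul_zero, add_zero, zero_mulVec, zero_add]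
  rfl

variable [DecidableEq m] [DecidableEq n]

def feedbackResolvent (S B : Matrix (m ⊕ n) (m ⊕ n) R) (W : Matrix n n R) :
    Matrix (m ⊕ n) (m ⊕ n) R :=
  (1 + (1 + S) * fromBlocks 0 0 0 W) * B

variable {A B S : Matrix (m ⊕ n) (m ⊕ n) R} {W : Matrix n n R}

theorem fromBlocks_zero_one_sub_mul_mul (S : Matrix (m ⊕ n) (m ⊕ n) R) :
    (fromBlocks 0 0 0 1 - fromBlocks 0 0 0 1 * S * fromBlocks 0 0 0 1 :
      Matrix (m ⊕ n) (m ⊕ n) R) = fromBlocks 0 0 0 (1 - S.toBlocks₂₂) := by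
  conv_lhs => rw [← fromBlocks_toBlocks S]
  simp [fromBlocks_multiply, sub_eq_add_neg, fromBlocks_neg, fromBlocks_add]

theorem sub_fromBlocks_mul_feedbackResolvent_eq_one (hAB : A * B = 1) (hS : S = 2 • B - 1)
    (hW : (1 - S.toBlocks₂₂) * W = 1) :
    (A - fromBlocks 0 0 0 1) * feedbackResolvent S B W = 1 :=
  sub_mul_resolvent_eq_one hAB hS (by simp [fromBlocks_multiply])
    (by simp [fromBlocks_zero_one_sub_mul_mul, fromBlocks_multiply, hW])

theorem feedbackResolvent_mul_sub_fromBlocks_eq_one (hBA : B * A = 1) (hS : S = 2 • B - 1)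
    (hW : W * (1 - S.toBlocks₂₂) = 1) :
    feedbackResolvent S B W * (A - fromBlocks 0 0 0 1) = 1 :=
  resolvent_mul_sub_eq_one hBA hS (by simp [fromBlocks_multiply])
    (by simp [fromBlocks_zero_one_sub_mul_mul, fromBlocks_multiply, hW])

theorem two_nsmul_toBlocks₁₁_feedbackResolvent_sub_one (hS : S = 2 • B - 1) :
    2 • (feedbackResolvent S B W).toBlocks₁₁ - 1 =
      S.toBlocks₁₁ + S.toBlocks₁₂ * W * S.toBlocks₂₁ := by
  subst hS
  rw [feedbackResolvent, ← fromBlocks_toBlocks B]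
  simp only [← fromBlocks_one, fromBlocks_smul, nsmul_eq_mul, Nat.cast_ofNat, sub_eq_add_neg,
    fromBlocks_neg, neg_zero, fromBlocks_add, add_zero, add_neg_cancel_comm_assoc, zero_add,
    fromBlocks_multiply, mul_zero, Matrix.mul_zero, smul_mul, one_mul, Matrix.one_mul,
    Matrix.zero_mul, toBlocks_fromBlocks₁₁, smul_add, toBlocks_fromBlocks₁₂,
    toBlocks_fromBlocks₂₁, Matrix.mul_smul]
  abel

theorem feedbackResolvent_mulVec_inl {𝕜 : Type*} [Monoid 𝕜] [DistribMulAction 𝕜 R]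
    [SMulCommClass 𝕜 R R] (z : 𝕜) (v : m ⊕ n → R) :
    (fun j => (z • B *ᵥ v) (Sum.inl j)) +
        (S.toBlocks₁₂ * W) *ᵥ (fun j => (z • B *ᵥ v) (Sum.inr j)) =
      z • fun j => (feedbackResolvent S B W *ᵥ v) (Sum.inl j) := by
  have h : z • feedbackResolvent S B W *ᵥ v =
      (1 + (1 + S) * fromBlocks 0 0 0 W) *ᵥ (z • B *ᵥ v) := by
    rw [feedbackResolvent, mulVec_smul, mulVec_mulVec]
  change _ = fun j => (z • feedbackResolvent S B W *ᵥ v) (Sum.inl j)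
  rw [h]
  generalize z • B *ᵥ v = w
  conv_rhs => rw [← fromBlocks_toBlocks S, ← fromBlocks_one, fromBlocks_add, fromBlocks_multiply,
    fromBlocks_add, fromBlocks_mulVec]
  simp only [Matrix.mul_zero, zero_add, add_zero, zero_mulVec, Sum.elim_inl, one_mulVec]
  rfl

end Feedback

theorem smul_mul_smul_of_mul_eq_one {𝕜 R : Type*} [CommSemiring 𝕜] [Semiring R] [Algebra 𝕜 R]
    {l m o : Type*} [Fintype m] {z w : 𝕜} (h : z * w = 1) (X : Matrix l m R)
    (Y : Matrix m o R) : (z • X) * (w • Y) = X * Y := by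
  rw [Matrix.smul_mul, Matrix.mul_smul, smul_smul, h, one_smul]

theorem feedbackResolvent_eq_fromBlocks_schur {𝕜 R : Type*} [Field 𝕜] [Ring R] [Algebra 𝕜 R]
    {m n : Type*} [Fintype m] [Fintype n] [DecidableEq m] [DecidableEq n] {z : 𝕜} (hz : z ≠ 0)
    {a : Matrix m m R} {b : Matrix m n R} {c : Matrix n m R} {d : Matrix n n R}
    [Invertible (1 + z • fromBlocks a b c d)] [Invertible d]
    [Invertible (1 + z • (a - b * ⅟d * c))] {S : Matrix (m ⊕ n) (m ⊕ n) R}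
    (hS : S = ⅟(1 + z • fromBlocks a b c d) * (1 - z • fromBlocks a b c d))
    [Invertible (1 - S.toBlocks₂₂)] :
    feedbackResolvent S ⅟(1 + z • fromBlocks a b c d) ⅟(1 - S.toBlocks₂₂) =
      fromBlocks ⅟(1 + z • (a - b * ⅟d * c)) (-(⅟(1 + z • (a - b * ⅟d * c)) * (b * ⅟d)))
        (-(⅟d * c * ⅟(1 + z • (a - b * ⅟d * c))))
        (z⁻¹ • ⅟d + ⅟d * c * ⅟(1 + z • (a - b * ⅟d * c)) * (b * ⅟d)) := by
  have hS' := hS.trans (invOf_mul_one_sub _)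
  have hAP : 1 + z • fromBlocks a b c d - fromBlocks 0 0 0 1 =
      fromBlocks (1 + z • a) (z • b) (z • c) (z • d) := by
    rw [fromBlocks_smul, ← fromBlocks_one, fromBlocks_add]
    simp [sub_eq_add_neg, fromBlocks_neg, fromBlocks_add]
  have hMC := hAP ▸
    sub_fromBlocks_mul_feedbackResolvent_eq_one (mul_invOf_self _) hS' (mul_invOf_self _)
  have hCM := hAP ▸
    feedbackResolvent_mul_sub_fromBlocks_eq_one (invOf_mul_self _) hS' (invOf_mul_self _)
  have hDd : (z⁻¹ • ⅟d) * (z • d) = 1 := by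
    rw [smul_mul_smul_of_mul_eq_one (inv_mul_cancel₀ hz), invOf_mul_self]
  have hdD : (z • d) * (z⁻¹ • ⅟d) = 1 := by
    rw [smul_mul_smul_of_mul_eq_one (mul_inv_cancel₀ hz), mul_invOf_self]
  have hbD := smul_mul_smul_of_mul_eq_one (mul_inv_cancel₀ hz) b ⅟d
  have hDc := smul_mul_smul_of_mul_eq_one (inv_mul_cancel₀ hz) ⅟d c
  have hG : ⅟(1 + z • (a - b * ⅟d * c)) =
      (feedbackResolvent S ⅟(1 + z • fromBlocks a b c d) ⅟(1 - S.toBlocks₂₂)).toBlocks₁₁ := by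
    have h := schur_mul_toBlocks₁₁_eq_one hMC hDd
    rw [hbD, Matrix.mul_smul, add_sub_assoc, ← smul_sub] at h
    exact invOf_eq_right_inv h
  rw [hG, ← hbD, ← hDc]
  exact eq_fromBlocks_schur_of_mul_eq_one hMC hCM hDd hdD

section Hamiltonian

theorem star_smul_mulVec_dotProduct_mulVec {R n : Type*} [Ring R] [StarRing R] [Algebra ℂ R]
    [StarModule ℂ R] [Fintype n] (z : ℂ) (B N : Matrix n n R) (x : n → R) :
    star (z • B *ᵥ star x) ⬝ᵥ N *ᵥ (z • B *ᵥ star x) =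
      (star z * z) • (x ⬝ᵥ (Bᴴ * N * B) *ᵥ star x) := by
  rw [star_smul, star_mulVec, star_star, smul_dotProduct, mulVec_smul, dotProduct_smul, smul_smul,
    dotProduct_mulVec, vecMul_vecMul, ← dotProduct_mulVec, mulVec_mulVec]

theorem IsSelfAdjoint.dotProduct_mulVec_star {R n : Type*} [Ring R] [StarRing R] [Fintype n]
    {M : Matrix n n R} (hM : IsSelfAdjoint M) (x : n → R) : IsSelfAdjoint (x ⬝ᵥ M *ᵥ star x) := by
  rw [IsSelfAdjoint, ← star_dotProduct_star, star_mulVec, star_star, ← dotProduct_mulVec,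
    ← star_eq_conjTranspose, hM.star_eq]

variable {R : Type*} [Ring R] [StarRing R] [Algebra ℂ R] [StarModule ℂ R]
  {m n : Type*} [Fintype m] [Fintype n] [DecidableEq m] [DecidableEq n]

theorem half_smul_imPart_add_feedback_eq {E S : Matrix (m ⊕ n) (m ⊕ n) R} (hE : IsSelfAdjoint E)
    [Invertible (1 + (Complex.I / 2) • E)]
    (hS : S = ⅟(1 + (Complex.I / 2) • E) * (1 - (Complex.I / 2) • E)) (W : Matrix n n R)
    {L x : m ⊕ n → R} (hL : L = (-Complex.I) • ⅟(1 + (Complex.I / 2) • E) *ᵥ star x) :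
    ((1 : ℂ) / 2) • imPart (x ⬝ᵥ ⅟(1 + (Complex.I / 2) • E) *ᵥ star x) +
        imPart ((fun j => star (L (Sum.inl j))) ⬝ᵥ (S.toBlocks₁₂ * W) *ᵥ fun j => L (Sum.inr j)) +
        imPart ((fun j => star (L (Sum.inr j))) ⬝ᵥ (S.toBlocks₂₂ * W) *ᵥ fun j => L (Sum.inr j)) =
      ((1 : ℂ) / 2) •
        imPart (x ⬝ᵥ feedbackResolvent S ⅟(1 + (Complex.I / 2) • E) W *ᵥ star x) := by
  set B := ⅟(1 + (Complex.I / 2) • E)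
  have hLL : ((fun j => star (L (Sum.inl j))) ⬝ᵥ (S.toBlocks₁₂ * W) *ᵥ fun j => L (Sum.inr j)) +
      (fun j => star (L (Sum.inr j))) ⬝ᵥ (S.toBlocks₂₂ * W) *ᵥ (fun j => L (Sum.inr j)) =
      x ⬝ᵥ (B * fromBlocks 0 0 0 W * B) *ᵥ star x := by
    have hBS : Bᴴ * S = B := hS ▸ star_invOf_mul_invOf_mul_one_sub_smul hE
    have hI : star (-Complex.I) * -Complex.I = 1 := by simp [Complex.conj_I]
    refine (dotProduct_mul_fromBlocks_mulVec S W (star L) L).symm.trans ?_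
    rw [hL, star_smul_mulVec_dotProduct_mulVec, ← Matrix.mul_assoc, hBS, hI, one_smul]
  have hC : x ⬝ᵥ feedbackResolvent S B W *ᵥ star x =
      x ⬝ᵥ B *ᵥ star x + x ⬝ᵥ (B * fromBlocks 0 0 0 W * B) *ᵥ star x +
        x ⬝ᵥ (B * fromBlocks 0 0 0 W * B) *ᵥ star x := by
    have h2B : 1 + S = 2 • B := by rw [hS.trans (invOf_mul_one_sub _), add_sub_cancel]
    rw [feedbackResolvent, h2B, two_nsmul]
    simp only [Matrix.add_mul, Matrix.one_mul, add_mulVec, dotProduct_add, add_assoc]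
  rw [add_assoc, ← imPart_add, hLL, hC, imPart_add, imPart_add]
  module

end Hamiltonian

theorem slh_feedback_eq_schur_slh_general
    {H : Type*} [NormedAddCommGroup H] [InnerProductSpace ℂ H] [CompleteSpace H]
    {e i : Type*} [Fintype e] [Fintype i] [DecidableEq e] [DecidableEq i]
    (E00 : H →L[ℂ] H) (E0e : e → H →L[ℂ] H) (E0i : i → H →L[ℂ] H)
    (Ee0 : e → H →L[ℂ] H) (Ei0 : i → H →L[ℂ] H)
    (Eee : Matrix e e (H →L[ℂ] H)) (Eei : Matrix e i (H →L[ℂ] H))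
    (Eie : Matrix i e (H →L[ℂ] H)) (Eii : Matrix i i (H →L[ℂ] H))
    -- self-adjointness relations (E_αβ)* = E_βα
    (h0e : ∀ j, star (E0e j) = Ee0 j) (h0i : ∀ j, star (E0i j) = Ei0 j)
    (hee : ∀ j k, star (Eee j k) = Eee k j)
    (hei : ∀ j k, star (Eei j k) = Eie k j)
    (hie : ∀ j k, star (Eie j k) = Eei k j)
    (hii : ∀ j k, star (Eii j k) = Eii k j)
    -- assembled blocks
    (Ekk : Matrix (e ⊕ i) (e ⊕ i) (H →L[ℂ] H)) (hEkk : Ekk = Matrix.fromBlocks Eee Eei Eie Eii)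
    (Ek0 : e ⊕ i → H →L[ℂ] H) (hEk0 : Ek0 = Sum.elim Ee0 Ei0)
    (E0k : e ⊕ i → H →L[ℂ] H) (hE0k : E0k = Sum.elim E0e E0i)
    -- the SLH parameters
    [Invertible (1 + (Complex.I / 2) • Ekk)]
    (Skk : Matrix (e ⊕ i) (e ⊕ i) (H →L[ℂ] H))
    (hSkk : Skk = ⅟(1 + (Complex.I / 2) • Ekk) * (1 - (Complex.I / 2) • Ekk))
    (Lk : e ⊕ i → H →L[ℂ] H)
    (hLk : Lk = (-Complex.I) • (⅟(1 + (Complex.I / 2) • Ekk)).mulVec Ek0)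
    (Hop : H →L[ℂ] H)
    (hHop : Hop = E00 +
      ((1 : ℂ) / 2) • imPart (E0k ⬝ᵥ (⅟(1 + (Complex.I / 2) • Ekk)).mulVec Ek0))
    -- the Schur complement of the Stratonovich matrix shortening i
    [Invertible Eii]
    (Efb00 : H →L[ℂ] H) (hEfb00 : Efb00 = E00 - E0i ⬝ᵥ (⅟Eii).mulVec Ei0)
    (Efb0e : e → H →L[ℂ] H) (hEfb0e : Efb0e = E0e - Matrix.vecMul (Matrix.vecMul E0i ⅟Eii) Eie)
    (Efbe0 : e → H →L[ℂ] H) (hEfbe0 : Efbe0 = Ee0 - (Eei * ⅟Eii).mulVec Ei0)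
    (Efbee : Matrix e e (H →L[ℂ] H)) (hEfbee : Efbee = Eee - Eei * ⅟Eii * Eie)
    -- well-posedness and existence of the reduced Cayley transform
    [Invertible (1 - Skk.toBlocks₂₂)]
    [Invertible (1 + (Complex.I / 2) • Efbee)] :
    -- (a) the feedback-reduced scattering matrix
    Skk.toBlocks₁₁ + Skk.toBlocks₁₂ * ⅟(1 - Skk.toBlocks₂₂) * Skk.toBlocks₂₁ =
        ⅟(1 + (Complex.I / 2) • Efbee) * (1 - (Complex.I / 2) • Efbee) ∧
    -- (b) the feedback-reduced coupling vector
    ((fun j => Lk (Sum.inl j)) +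
        (Skk.toBlocks₁₂ * ⅟(1 - Skk.toBlocks₂₂)).mulVec fun j => Lk (Sum.inr j)) =
      (-Complex.I) • (⅟(1 + (Complex.I / 2) • Efbee)).mulVec Efbe0 ∧
    -- (c) the feedback-reduced Hamiltonian
    Hop +
        imPart ((fun j => star (Lk (Sum.inl j))) ⬝ᵥ
          (Skk.toBlocks₁₂ * ⅟(1 - Skk.toBlocks₂₂)).mulVec fun j => Lk (Sum.inr j)) +
        imPart ((fun j => star (Lk (Sum.inr j))) ⬝ᵥ
          (Skk.toBlocks₂₂ * ⅟(1 - Skk.toBlocks₂₂)).mulVec fun j => Lk (Sum.inr j)) =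
      Efb00 +
        ((1 : ℂ) / 2) • imPart (Efb0e ⬝ᵥ (⅟(1 + (Complex.I / 2) • Efbee)).mulVec Efbe0) := by
  subst hEkk hEfbee
  have hE : IsSelfAdjoint (fromBlocks Eee Eei Eie Eii) := by
    rw [IsSelfAdjoint, star_eq_conjTranspose, fromBlocks_conjTranspose]
    congr 1 <;> ext <;> simp [hee, hei, hie, hii]
  have hx : Ek0 = star E0k := by
    rw [hEk0, hE0k]
    ext (j | j) <;> simp [h0e, h0i]
  have hy : IsSelfAdjoint (E0i ⬝ᵥ ⅟Eii *ᵥ Ei0) := by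
    have hEii : IsSelfAdjoint Eii := by ext; simp [hii]
    simpa only [show star E0i = Ei0 from funext h0i] using hEii.invOf.dotProduct_mulVec_star E0i
  have hC := feedbackResolvent_eq_fromBlocks_schur (by simp [Complex.I_ne_zero]) hSkk
  refine ⟨?_, ?_, ?_⟩
  · rw [invOf_mul_one_sub, ← two_nsmul_toBlocks₁₁_feedbackResolvent_sub_one
      (hSkk.trans (invOf_mul_one_sub _)), hC, toBlocks_fromBlocks₁₁]
  · rw [hLk, feedbackResolvent_mulVec_inl, hC, hEk0, fromBlocks_schur_mulVec, hEfbe0]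
    rfl
  · rw [hx] at hLk hHop
    rw [hHop, add_assoc E00, add_assoc E00, half_smul_imPart_add_feedback_eq hE hSkk _ hLk, hC,
      ← hx, hEk0, hE0k, sumElim_dotProduct_fromBlocks_schur_mulVec, hEfb00, hEfb0e, hEfbe0,
      vecMul_vecMul, smul_mulVec, dotProduct_smul, imPart_add, imPart_smul_of_isSelfAdjoint _ hy,
      show ((Complex.I / 2)⁻¹).im = -2 by simp]
    module

/-- the feedback-reduced SLH triple `(S^fb, L^fb, H^fb)` of the
SLH model determined by a Stratonovich generator matrix `E` (indexed by
`0 ∪ e ∪ i`, self-adjoint as `(E_αβ)* = E_βα`) is the SLH triple determined by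
the Schur complement of `E` shortening the internal labels `i`. -/
theorem slh_feedback_eq_schur_slh
    {H : Type*} [NormedAddCommGroup H] [InnerProductSpace ℂ H] [CompleteSpace H]
    {e i : Type*} [Fintype e] [Fintype i] [DecidableEq e] [DecidableEq i]
    (E00 : H →L[ℂ] H) (E0e : e → H →L[ℂ] H) (E0i : i → H →L[ℂ] H)
    (Ee0 : e → H →L[ℂ] H) (Ei0 : i → H →L[ℂ] H)
    (Eee : Matrix e e (H →L[ℂ] H)) (Eei : Matrix e i (H →L[ℂ] H))
    (Eie : Matrix i e (H →L[ℂ] H)) (Eii : Matrix i i (H →L[ℂ] H))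
    -- self-adjointness relations (E_αβ)* = E_βα
    (h00 : star E00 = E00)
    (h0e : ∀ j, star (E0e j) = Ee0 j) (h0i : ∀ j, star (E0i j) = Ei0 j)
    (he0 : ∀ j, star (Ee0 j) = E0e j) (hi0 : ∀ j, star (Ei0 j) = E0i j)
    (hee : ∀ j k, star (Eee j k) = Eee k j)
    (hei : ∀ j k, star (Eei j k) = Eie k j)
    (hie : ∀ j k, star (Eie j k) = Eei k j)
    (hii : ∀ j k, star (Eii j k) = Eii k j)
    -- assembled blocks
    (Ekk : Matrix (e ⊕ i) (e ⊕ i) (H →L[ℂ] H)) (hEkk : Ekk = Matrix.fromBlocks Eee Eei Eie Eii)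
    (Ek0 : e ⊕ i → H →L[ℂ] H) (hEk0 : Ek0 = Sum.elim Ee0 Ei0)
    (E0k : e ⊕ i → H →L[ℂ] H) (hE0k : E0k = Sum.elim E0e E0i)
    -- the SLH parameters
    [Invertible (1 + (Complex.I / 2) • Ekk)]
    (Skk : Matrix (e ⊕ i) (e ⊕ i) (H →L[ℂ] H))
    (hSkk : Skk = ⅟(1 + (Complex.I / 2) • Ekk) * (1 - (Complex.I / 2) • Ekk))
    (Lk : e ⊕ i → H →L[ℂ] H)
    (hLk : Lk = (-Complex.I) • (⅟(1 + (Complex.I / 2) • Ekk)).mulVec Ek0)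
    (Hop : H →L[ℂ] H)
    (hHop : Hop = E00 +
      ((1 : ℂ) / 2) • imPart (E0k ⬝ᵥ (⅟(1 + (Complex.I / 2) • Ekk)).mulVec Ek0))
    -- the Schur complement of the Stratonovich matrix shortening i
    [Invertible Eii]
    (Efb00 : H →L[ℂ] H) (hEfb00 : Efb00 = E00 - E0i ⬝ᵥ (⅟Eii).mulVec Ei0)
    (Efb0e : e → H →L[ℂ] H) (hEfb0e : Efb0e = E0e - Matrix.vecMul (Matrix.vecMul E0i ⅟Eii) Eie)
    (Efbe0 : e → H →L[ℂ] H) (hEfbe0 : Efbe0 = Ee0 - (Eei * ⅟Eii).mulVec Ei0)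
    (Efbee : Matrix e e (H →L[ℂ] H)) (hEfbee : Efbee = Eee - Eei * ⅟Eii * Eie)
    -- well-posedness and existence of the reduced Cayley transform
    [Invertible (1 - Skk.toBlocks₂₂)]
    [Invertible (1 + (Complex.I / 2) • Efbee)] :
    -- (a) the feedback-reduced scattering matrix
    Skk.toBlocks₁₁ + Skk.toBlocks₁₂ * ⅟(1 - Skk.toBlocks₂₂) * Skk.toBlocks₂₁ =
        ⅟(1 + (Complex.I / 2) • Efbee) * (1 - (Complex.I / 2) • Efbee) ∧
    -- (b) the feedback-reduced coupling vector
    ((fun j => Lk (Sum.inl j)) +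
        (Skk.toBlocks₁₂ * ⅟(1 - Skk.toBlocks₂₂)).mulVec fun j => Lk (Sum.inr j)) =
      (-Complex.I) • (⅟(1 + (Complex.I / 2) • Efbee)).mulVec Efbe0 ∧
    -- (c) the feedback-reduced Hamiltonian
    Hop +
        imPart ((fun j => star (Lk (Sum.inl j))) ⬝ᵥ
          (Skk.toBlocks₁₂ * ⅟(1 - Skk.toBlocks₂₂)).mulVec fun j => Lk (Sum.inr j)) +
        imPart ((fun j => star (Lk (Sum.inr j))) ⬝ᵥ
          (Skk.toBlocks₂₂ * ⅟(1 - Skk.toBlocks₂₂)).mulVec fun j => Lk (Sum.inr j)) =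
      Efb00 +
        ((1 : ℂ) / 2) • imPart (Efb0e ⬝ᵥ (⅟(1 + (Complex.I / 2) • Efbee)).mulVec Efbe0) :=
  slh_feedback_eq_schur_slh_general E00 E0e E0i Ee0 Ei0 Eee Eei Eie Eii h0e h0i hee hei hie hii Ekk
    hEkk Ek0 hEk0 E0k hE0k Skk hSkk Lk hLk Hop hHop Efb00 hEfb00 Efb0e hEfb0e Efbe0 hEfbe0 Efbee
    hEfbee
end

section
/- Let R be a unital associative ℂ-algebra and let e, i be finite index types. Let E = [[E_ee, E_ei],[E_ie, E_ii]] be a 2×2 block matrix over R. Assume I_e + (i/2)E_ee is invertible and I + (i/2)E is invertible, and let S = (I + (i/2)E)⁻¹(I − (i/2)E) with blocks [[S_ee, S_ei],[S_ie, S_ii]]. Define 𝓔_ii = E_ii − (i/2)·E_ie (I_e + (i/2)E_ee)⁻¹ E_ei. Then I_i + (i/2)𝓔_ii is invertible, S_ii = (I_i − (i/2)𝓔_ii)(I_i + (i/2)𝓔_ii)⁻¹, and I_i − S_ii is invertible if and only if 𝓔_ii is invertible. -/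
open Matrix in
/-- Auxiliary: over a (possibly noncommutative) ring, if a 2×2 block matrix
`[a b; c d]` and its top-left block `a` are invertible, then the bottom-right
block of the inverse is a two-sided inverse of the Schur complement
`d - c ⅟a b`. -/
theorem invOf_toBlocks₂₂_schur
    {R : Type*} [Ring R] {e i : Type*} [Fintype e] [Fintype i]
    [DecidableEq e] [DecidableEq i]
    (a : Matrix e e R) (b : Matrix e i R) (c : Matrix i e R) (d : Matrix i i R)
    [Invertible a] (M : Matrix (e ⊕ i) (e ⊕ i) R) [Invertible M]
    (hM : M = fromBlocks a b c d) :
    (⅟M).toBlocks₂₂ * (d - c * ⅟a * b) = 1 ∧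
      (d - c * ⅟a * b) * (⅟M).toBlocks₂₂ = 1 := by
  set B := ⅟M with hBdef
  set p : Matrix e e R := B.toBlocks₁₁ with hp
  set q : Matrix e i R := B.toBlocks₁₂ with hq
  set r : Matrix i e R := B.toBlocks₂₁ with hr
  set s : Matrix i i R := B.toBlocks₂₂ with hs
  have hB : B = fromBlocks p q r s := (fromBlocks_toBlocks B).symm
  have h1 : fromBlocks (p * a + q * c) (p * b + q * d) (r * a + s * c) (r * b + s * d)
      = fromBlocks (1 : Matrix e e R) 0 0 (1 : Matrix i i R) := by
    rw [← fromBlocks_multiply, ← hB, ← hM, fromBlocks_one]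
    exact invOf_mul_self _
  have h2 : fromBlocks (a * p + b * r) (a * q + b * s) (c * p + d * r) (c * q + d * s)
      = fromBlocks (1 : Matrix e e R) 0 0 (1 : Matrix i i R) := by
    rw [← fromBlocks_multiply, ← hB, ← hM, fromBlocks_one]
    exact mul_invOf_self _
  rw [fromBlocks_inj] at h1 h2
  obtain ⟨h1a, h1b, h1c, h1d⟩ := h1
  obtain ⟨h2a, h2b, h2c, h2d⟩ := h2
  constructor
  · -- s * (d - c * ⅟a * b) = 1
    have hsc : s * c = -(r * a) := eq_neg_of_add_eq_zero_right h1c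
    have hsd : s * d = 1 - r * b := eq_sub_of_add_eq' h1d
    rw [mul_sub, ← Matrix.mul_assoc, ← Matrix.mul_assoc, hsc, hsd, Matrix.neg_mul,
      Matrix.mul_invOf_cancel_right, Matrix.neg_mul]
    abel
  · -- (d - c * ⅟a * b) * s = 1
    have hqe : q = -(⅟a * (b * s)) := by
      have h : a * q = -(b * s) := eq_neg_of_add_eq_zero_left h2b
      rw [← Matrix.invOf_mul_cancel_left a q, h, Matrix.mul_neg]
    have hds : d * s = 1 - c * q := eq_sub_of_add_eq' h2d
    rw [sub_mul, hds, hqe, Matrix.mul_neg, sub_neg_eq_add, Matrix.mul_assoc (c * ⅟a) b s,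
      Matrix.mul_assoc c (⅟a) (b * s)]
    abel

open Matrix in
/-- well-posedness of the feedback network in terms of the
Stratonovich blocks: `S_ii` is the Cayley transform of
`𝓔_ii = E_ii − (i/2) E_ie (I_e + (i/2) E_ee)⁻¹ E_ei`, and `I_i − S_ii` is
invertible iff `𝓔_ii` is. -/
theorem wellPosed_iff_scrE_invertible
    {R : Type*} [Ring R] [Algebra ℂ R]
    {e i : Type*} [Fintype e] [Fintype i] [DecidableEq e] [DecidableEq i]
    (E : Matrix (e ⊕ i) (e ⊕ i) R)
    [Invertible (1 + (Complex.I / 2) • E.toBlocks₁₁)]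
    [Invertible (1 + (Complex.I / 2) • E)]
    (S : Matrix (e ⊕ i) (e ⊕ i) R)
    (hS : S = ⅟(1 + (Complex.I / 2) • E) * (1 - (Complex.I / 2) • E))
    (scrE : Matrix i i R)
    (hscrE : scrE = E.toBlocks₂₂ -
      (Complex.I / 2) • (E.toBlocks₂₁ * ⅟(1 + (Complex.I / 2) • E.toBlocks₁₁) * E.toBlocks₁₂)) :
    IsUnit (1 + (Complex.I / 2) • scrE) ∧
      S.toBlocks₂₂ =
        (1 - (Complex.I / 2) • scrE) * Ring.inverse (1 + (Complex.I / 2) • scrE) ∧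
      (IsUnit (1 - S.toBlocks₂₂) ↔ IsUnit scrE) := by
  have hM : 1 + (Complex.I / 2) • E
      = fromBlocks (1 + (Complex.I / 2) • E.toBlocks₁₁) ((Complex.I / 2) • E.toBlocks₁₂)
        ((Complex.I / 2) • E.toBlocks₂₁) (1 + (Complex.I / 2) • E.toBlocks₂₂) := by
    conv_lhs => rw [← fromBlocks_toBlocks E,
      ← fromBlocks_one (l := e) (m := i) (α := R), fromBlocks_smul, fromBlocks_add]
    rw [zero_add, zero_add]
  obtain ⟨hsD, hDs⟩ := invOf_toBlocks₂₂_schur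
    (1 + (Complex.I / 2) • E.toBlocks₁₁) ((Complex.I / 2) • E.toBlocks₁₂)
    ((Complex.I / 2) • E.toBlocks₂₁) (1 + (Complex.I / 2) • E.toBlocks₂₂)
    (1 + (Complex.I / 2) • E) hM
  have key : 1 + (Complex.I / 2) • scrE
      = (1 + (Complex.I / 2) • E.toBlocks₂₂) -
          ((Complex.I / 2) • E.toBlocks₂₁) * ⅟(1 + (Complex.I / 2) • E.toBlocks₁₁) *
            ((Complex.I / 2) • E.toBlocks₁₂) := by
    rw [hscrE, Matrix.smul_mul, Matrix.smul_mul, Matrix.mul_smul, smul_sub, smul_smul]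
    abel
  rw [← key] at hsD hDs
  set s : Matrix i i R := (⅟(1 + (Complex.I / 2) • E)).toBlocks₂₂ with hsdef
  letI instD : Invertible (1 + (Complex.I / 2) • scrE) := ⟨s, hsD, hDs⟩
  have hSeq : S = ⅟(1 + (Complex.I / 2) • E) + ⅟(1 + (Complex.I / 2) • E) - 1 := by
    rw [hS]
    have h2 : (1 : Matrix (e ⊕ i) (e ⊕ i) R) - (Complex.I / 2) • E
        = 1 + 1 - (1 + (Complex.I / 2) • E) := by abel
    rw [h2, mul_sub, mul_add, mul_one, invOf_mul_self]
  have hS22 : S.toBlocks₂₂ = s + s - 1 := by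
    rw [hSeq, hsdef]
    ext x y
    simp only [toBlocks₂₂, Matrix.sub_apply, Matrix.add_apply, Matrix.of_apply,
      Matrix.one_apply, Sum.inr.injEq]
  refine ⟨isUnit_of_invertible _, ?_, ?_⟩
  · rw [Ring.inverse_invertible]
    have hinvD : (⅟(1 + (Complex.I / 2) • scrE) : Matrix i i R) = s := rfl
    rw [hinvD, hS22]
    have h1z : (1 : Matrix i i R) - (Complex.I / 2) • scrE
        = 1 + 1 - (1 + (Complex.I / 2) • scrE) := by abel
    rw [h1z, sub_mul, add_mul, one_mul, hDs]
  · have h1s : (Complex.I / 2) • (scrE * s) = 1 - s := by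
      rw [← Matrix.smul_mul]
      have hzz : (Complex.I / 2) • scrE = (1 + (Complex.I / 2) • scrE) - 1 := by abel
      rw [hzz, sub_mul, one_mul, hDs]
    have h3 : 1 - S.toBlocks₂₂ = Complex.I • (scrE * s) := by
      have hzi : (Complex.I : ℂ) = Complex.I / 2 + Complex.I / 2 := by ring
      rw [hS22, hzi, add_smul, h1s]
      abel
    rw [h3, Algebra.smul_def]
    have uI : IsUnit ((algebraMap ℂ (Matrix i i R)) Complex.I) :=
      (isUnit_iff_ne_zero.2 Complex.I_ne_zero).map (algebraMap ℂ (Matrix i i R))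
    have hsu : IsUnit s := ⟨⟨s, 1 + (Complex.I / 2) • scrE, hsD, hDs⟩, rfl⟩
    rw [← uI.unit_spec, Units.isUnit_units_mul, ← hsu.unit_spec, Units.isUnit_mul_units]
end

section
/- Let R be a unital associative ℂ-algebra and let e, i be finite index types. Let S = [[S_ee, S_ei],[S_ie, S_ii]] be a 2×2 block matrix over R such that I + S is invertible and I_e + S_ee is invertible, and let E = (2/i)·(I + S)⁻¹(I − S) with blocks [[E_ee, E_ei],[E_ie, E_ii]]. Define 𝒮_ii = S_ii − S_ie (I_e + S_ee)⁻¹ S_ei (so that I_i + 𝒮_ii is the Schur complement of I + S shortening e). Then I_i + 𝒮_ii is invertible, E_ii = (2/i)·(I_i + 𝒮_ii)⁻¹(I_i − 𝒮_ii), and E_ii is invertible if and only if I_i − 𝒮_ii is invertible. -/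
/-!
Write `N = (1 + S)⁻¹` and `T` for its internal block. Block elimination in `(1 + S) N = 1` and
`N (1 + S) = 1` (valid over any ring, since only `1 + S_ee` is ever inverted) shows that `T` is a
two-sided inverse of the Schur complement `1 + 𝒮_ii`. From `N (1 + S) = 1` one gets
`N (1 - S) = 2N - 1`, whose internal block is `2T - 1 = T (1 - 𝒮_ii)`. Hence
`E_ii = (2/i) T (1 - 𝒮_ii)`, and since `2/i` and `T` are units, `E_ii` is a unit exactly when
`1 - 𝒮_ii` is.
-/

namespace Matrix

variable {m n α : Type*} [Fintype m] [Fintype n] [DecidableEq m] [DecidableEq n] [Ring α]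

theorem schur₁₁_mul_toBlocks₂₂_eq_one {A : Matrix m m α} [Invertible A] {B : Matrix m n α}
    {C : Matrix n m α} {D : Matrix n n α} {N : Matrix (m ⊕ n) (m ⊕ n) α}
    (h : fromBlocks A B C D * N = 1) :
    (D - C * ⅟A * B) * N.toBlocks₂₂ = 1 := by
  rw [← N.fromBlocks_toBlocks, fromBlocks_multiply, ← fromBlocks_one, fromBlocks_inj] at h
  obtain ⟨-, h₁₂, -, h₂₂⟩ := h
  have hB : B * N.toBlocks₂₂ = -(A * N.toBlocks₁₂) := eq_neg_of_add_eq_zero_right h₁₂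
  rw [Matrix.sub_mul, Matrix.mul_assoc, hB, Matrix.mul_neg, Matrix.mul_assoc C,
    Matrix.invOf_mul_cancel_left, sub_neg_eq_add, add_comm, h₂₂]

theorem toBlocks₂₂_mul_schur₁₁_eq_one {A : Matrix m m α} [Invertible A] {B : Matrix m n α}
    {C : Matrix n m α} {D : Matrix n n α} {N : Matrix (m ⊕ n) (m ⊕ n) α}
    (h : N * fromBlocks A B C D = 1) :
    N.toBlocks₂₂ * (D - C * ⅟A * B) = 1 := by
  rw [← N.fromBlocks_toBlocks, fromBlocks_multiply, ← fromBlocks_one, fromBlocks_inj] at h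
  obtain ⟨-, -, h₂₁, h₂₂⟩ := h
  have hC : N.toBlocks₂₂ * C = -(N.toBlocks₂₁ * A) := eq_neg_of_add_eq_zero_right h₂₁
  rw [Matrix.mul_sub, ← Matrix.mul_assoc, ← Matrix.mul_assoc, hC, Matrix.neg_mul, Matrix.neg_mul,
    Matrix.mul_invOf_cancel_right, sub_neg_eq_add, add_comm, h₂₂]

omit [Fintype m] [Fintype n] in
theorem one_add_eq_fromBlocks (S : Matrix (m ⊕ n) (m ⊕ n) α) :
    1 + S = fromBlocks (1 + S.toBlocks₁₁) S.toBlocks₁₂ S.toBlocks₂₁ (1 + S.toBlocks₂₂) := by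
  conv_lhs => rw [← S.fromBlocks_toBlocks, ← fromBlocks_one, fromBlocks_add]
  simp only [zero_add]

end Matrix

theorem mul_one_sub_of_mul_one_add_eq_one {R : Type*} [Ring R] {x y : R} (h : y * (1 + x) = 1) :
    y * (1 - x) = y + y - 1 := by
  rw [show (1 : R) - x = 1 + 1 - (1 + x) by abel, mul_sub, h, mul_add, mul_one]

theorem isUnit_smul_iff₀ {K A : Type*} [GroupWithZero K] [Monoid A] [MulAction K A]
    [IsScalarTower K A A] [SMulCommClass K A A] {c : K} (hc : c ≠ 0) (a : A) :
    IsUnit (c • a) ↔ IsUnit a :=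
  isUnit_smul_iff (Units.mk0 c hc) a

/-- test for invertibility of the internal Stratonovich block
`E_ii` purely in terms of the blocks of the scattering matrix `S`:
with `𝒮_ii = S_ii − S_ie (I_e + S_ee)⁻¹ S_ei`, one has
`E_ii = (2/i)(I_i + 𝒮_ii)⁻¹(I_i − 𝒮_ii)`, and `E_ii` is invertible iff
`I_i − 𝒮_ii` is invertible. -/
theorem Eii_invertible_iff
    {R : Type*} [Ring R] [Algebra ℂ R]
    {e i : Type*} [Fintype e] [Fintype i] [DecidableEq e] [DecidableEq i]
    (S : Matrix (e ⊕ i) (e ⊕ i) R)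
    [Invertible (1 + S)]
    [Invertible (1 + S.toBlocks₁₁)]
    (E : Matrix (e ⊕ i) (e ⊕ i) R)
    (hE : E = (2 / Complex.I) • (⅟(1 + S) * (1 - S)))
    (scrS : Matrix i i R)
    (hscrS : scrS = S.toBlocks₂₂ - S.toBlocks₂₁ * ⅟(1 + S.toBlocks₁₁) * S.toBlocks₁₂) :
    IsUnit (1 + scrS) ∧
      E.toBlocks₂₂ = (2 / Complex.I) • (Ring.inverse (1 + scrS) * (1 - scrS)) ∧
      (IsUnit E.toBlocks₂₂ ↔ IsUnit (1 - scrS)) := by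
  set T := (⅟(1 + S)).toBlocks₂₂
  have hschur : 1 + scrS
      = (1 + S.toBlocks₂₂) - S.toBlocks₂₁ * ⅟(1 + S.toBlocks₁₁) * S.toBlocks₁₂ := by
    rw [hscrS]; abel
  have hT_left : T * (1 + scrS) = 1 := hschur ▸ Matrix.toBlocks₂₂_mul_schur₁₁_eq_one
    (Matrix.one_add_eq_fromBlocks S ▸ invOf_mul_self (1 + S))
  have hT_right : (1 + scrS) * T = 1 := hschur ▸ Matrix.schur₁₁_mul_toBlocks₂₂_eq_one
    (Matrix.one_add_eq_fromBlocks S ▸ mul_invOf_self (1 + S))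
  let u : (Matrix i i R)ˣ := ⟨1 + scrS, T, hT_right, hT_left⟩
  have hE₂₂ : E.toBlocks₂₂ = (2 / Complex.I) • (T * (1 - scrS)) := by
    rw [mul_one_sub_of_mul_one_add_eq_one hT_left, hE,
      mul_one_sub_of_mul_one_add_eq_one (invOf_mul_self (1 + S))]
    ext k l
    simp [Matrix.toBlocks₂₂, Matrix.one_apply, T]
  refine ⟨u.isUnit, by rw [hE₂₂, Ring.inverse_unit u]; rfl, ?_⟩
  rw [hE₂₂, isUnit_smul_iff₀ (by simp [Complex.I_ne_zero])]
  exact Units.isUnit_units_mul u⁻¹ _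
end

section
/- Let R be a unital associative ℂ-algebra and let E₁, E₂ be square matrices over R of the same size with 1 + (i/2)E₁ and 1 + (i/2)E₂ invertible, and let V₁, V₂ be their Cayley transforms V_j = (1 − (i/2)E_j)(1 + (i/2)E_j)⁻¹. Assume 1 − (1/4)E₂E₁ is invertible, and define E_series = (1 + (i/2)E₂)⁻¹ (E₁ + E₂) (1 − (1/4)E₂E₁)⁻¹ (1 + (i/2)E₂). Then 1 + (i/2)E_series is invertible and V₂V₁ = (1 − (i/2)E_series)(1 + (i/2)E_series)⁻¹, i.e. the product of the Cayley transforms of E₂ and E₁ is the Cayley transform of E_series. -/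
lemma series_aux {M : Type*} [Ring M] (a₁ a₂ b₁ b₂ d s : M)
    [Invertible a₁] [Invertible a₂] [Invertible d]
    (h1 : a₂ * a₁ = d + s) (h2 : b₂ * b₁ = d - s)
    (hc2 : Commute a₂ b₂) :
    IsUnit (1 + ⅟a₂ * s * ⅟d * a₂) ∧
      (b₂ * ⅟a₂) * (b₁ * ⅟a₁) =
        (1 - ⅟a₂ * s * ⅟d * a₂) * Ring.inverse (1 + ⅟a₂ * s * ⅟d * a₂) := by
  have hp : 1 + ⅟a₂ * s * ⅟d * a₂ = a₁ * ⅟d * a₂ := by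
    have : ⅟a₂ * (d + s) * ⅟d * a₂ = 1 + ⅟a₂ * s * ⅟d * a₂ := by
      simp [mul_add, add_mul, mul_assoc]
    rw [← this, ← h1]
    simp [mul_assoc]
  have hm : 1 - ⅟a₂ * s * ⅟d * a₂ = ⅟a₂ * (b₂ * b₁) * ⅟d * a₂ := by
    have : ⅟a₂ * (d - s) * ⅟d * a₂ = 1 - ⅟a₂ * s * ⅟d * a₂ := by
      simp [mul_sub, sub_mul, mul_assoc]
    rw [← this, ← h2]
  letI : Invertible (a₁ * ⅟d) := invertibleMul _ _
  letI : Invertible (a₁ * ⅟d * a₂) := invertibleMul _ _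
  letI : Invertible (1 + ⅟a₂ * s * ⅟d * a₂) := (invertibleMul _ _).copy _ hp
  refine ⟨isUnit_of_invertible _, ?_⟩
  rw [Ring.inverse_invertible]
  have hinv : ⅟(1 + ⅟a₂ * s * ⅟d * a₂) = ⅟a₂ * d * ⅟a₁ := by
    apply invOf_eq_right_inv
    rw [hp]
    calc a₁ * ⅟d * a₂ * (⅟a₂ * d * ⅟a₁)
        = a₁ * (⅟d * (a₂ * ⅟a₂) * d) * ⅟a₁ := by noncomm_ring
      _ = 1 := by simp
  rw [hinv, hm]
  have hb2 : b₂ * ⅟a₂ = ⅟a₂ * b₂ := (hc2.invOf_left).symm.eq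
  calc b₂ * ⅟a₂ * (b₁ * ⅟a₁) = ⅟a₂ * (b₂ * b₁) * ⅟a₁ := by rw [hb2]; noncomm_ring
    _ = ⅟a₂ * (b₂ * b₁) * (⅟d * (a₂ * ⅟a₂) * d) * ⅟a₁ := by simp
    _ = ⅟a₂ * (b₂ * b₁) * ⅟d * a₂ * (⅟a₂ * d * ⅟a₁) := by noncomm_ring

set_option maxHeartbeats 1000000 in
/-- the series product. The product `V₂V₁` of the Cayley
transforms of Stratonovich matrices `E₂`, `E₁` is the Cayley transform of
`E_series = (1 + (i/2)E₂)⁻¹ (E₁ + E₂) (1 − (1/4)E₂E₁)⁻¹ (1 + (i/2)E₂)`. -/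
theorem series_product_stratonovich
    {R : Type*} [Ring R] [Algebra ℂ R]
    {k : Type*} [Fintype k] [DecidableEq k]
    (E₁ E₂ : Matrix k k R)
    [Invertible (1 + (Complex.I / 2) • E₁)]
    [Invertible (1 + (Complex.I / 2) • E₂)]
    [Invertible (1 - ((1 : ℂ) / 4) • (E₂ * E₁))]
    (V₁ V₂ : Matrix k k R)
    (hV₁ : V₁ = (1 - (Complex.I / 2) • E₁) * ⅟(1 + (Complex.I / 2) • E₁))
    (hV₂ : V₂ = (1 - (Complex.I / 2) • E₂) * ⅟(1 + (Complex.I / 2) • E₂))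
    (Eseries : Matrix k k R)
    (hEseries : Eseries = ⅟(1 + (Complex.I / 2) • E₂) * (E₁ + E₂) *
      ⅟(1 - ((1 : ℂ) / 4) • (E₂ * E₁)) * (1 + (Complex.I / 2) • E₂)) :
    IsUnit (1 + (Complex.I / 2) • Eseries) ∧
      V₂ * V₁ =
        (1 - (Complex.I / 2) • Eseries) * Ring.inverse (1 + (Complex.I / 2) • Eseries) := by
  have hcc : (Complex.I/2) * (Complex.I/2) = -(1/4 : ℂ) := by
    rw [div_mul_div_comm, Complex.I_mul_I]; norm_num
  have huv : ((Complex.I/2) • E₂ : Matrix k k R) * ((Complex.I/2) • E₁)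
      = -(((1:ℂ)/4) • (E₂ * E₁)) := by
    rw [smul_mul_assoc, mul_smul_comm, smul_smul, hcc, neg_smul]
  have h1 : (1 + (Complex.I/2) • E₂) * (1 + (Complex.I/2) • E₁)
      = (1 - ((1:ℂ)/4) • (E₂ * E₁)) + (Complex.I/2) • (E₁ + E₂) := by
    have e : (1 + (Complex.I/2) • E₂) * (1 + (Complex.I/2) • E₁)
        = 1 + (Complex.I/2) • E₁ + (Complex.I/2) • E₂
          + ((Complex.I/2) • E₂) * ((Complex.I/2) • E₁) := by noncomm_ring; module
    rw [e, huv, smul_add]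
    abel
  have h2 : (1 - (Complex.I/2) • E₂) * (1 - (Complex.I/2) • E₁)
      = (1 - ((1:ℂ)/4) • (E₂ * E₁)) - (Complex.I/2) • (E₁ + E₂) := by
    have e : (1 - (Complex.I/2) • E₂) * (1 - (Complex.I/2) • E₁)
        = 1 - (Complex.I/2) • E₁ - (Complex.I/2) • E₂
          + ((Complex.I/2) • E₂) * ((Complex.I/2) • E₁) := by noncomm_ring; module
    rw [e, huv, smul_add]
    abel
  have hc2 : Commute (1 + (Complex.I/2) • E₂) (1 - (Complex.I/2) • E₂) :=
    (Commute.one_right _).sub_right ((Commute.one_left _).add_left (Commute.refl _))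
  have hX : (Complex.I/2) • Eseries
      = ⅟(1 + (Complex.I/2) • E₂) * ((Complex.I/2) • (E₁ + E₂)) *
        ⅟(1 - ((1:ℂ)/4) • (E₂ * E₁)) * (1 + (Complex.I/2) • E₂) := by
    rw [hEseries]
    simp only [smul_mul_assoc, mul_smul_comm]
  rw [hV₁, hV₂, hX]
  exact series_aux _ _ _ _ _ _ h1 h2 hc2
end

section
/- Let R be a unital associative ring in which 2 is invertible, and let F₁, F₂ ∈ R with 1 + F₁, 1 + F₂, and 1 + F₂F₁ invertible. Set V₁ = (1 − F₁)(1 + F₁)⁻¹, V₂ = (1 − F₂)(1 + F₂)⁻¹, and F₃ = (1 + V₂)(F₁ + F₂)(1 + F₂F₁)⁻¹(1 + V₂)⁻¹. Then 1 + F₃ is invertible and (1 − F₃)(1 + F₃)⁻¹ = V₂V₁; that is, F₃ solves V(F₃) = V(F₂)V(F₁) for the Cayley map V(F) = (1 − F)(1 + F)⁻¹. -/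
/-- key computation for the series product: in a unital ring with
`2` invertible, given `1 + F₁`, `1 + F₂`, `1 + F₂F₁` invertible, the element
`F₃ = (1 + V₂)(F₁ + F₂)(1 + F₂F₁)⁻¹(1 + V₂)⁻¹` solves
`V(F₃) = V(F₂)V(F₁)` for the Cayley map `V(F) = (1 − F)(1 + F)⁻¹`. -/
theorem cayley_series_solution
    {R : Type*} [Ring R] [Invertible (2 : R)]
    (F₁ F₂ : R) [Invertible (1 + F₁)] [Invertible (1 + F₂)] [Invertible (1 + F₂ * F₁)]
    (V₁ V₂ : R)
    (hV₁ : V₁ = (1 - F₁) * ⅟(1 + F₁))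
    (hV₂ : V₂ = (1 - F₂) * ⅟(1 + F₂))
    (F₃ : R)
    (hF₃ : F₃ = (1 + V₂) * (F₁ + F₂) * ⅟(1 + F₂ * F₁) * Ring.inverse (1 + V₂)) :
    IsUnit (1 + V₂) ∧
      IsUnit (1 + F₃) ∧
      (1 - F₃) * Ring.inverse (1 + F₃) = V₂ * V₁ := by
  have h2comm : ∀ x : R, (2 : R) * x = x * 2 := fun x => by rw [two_mul, mul_two]
  -- `1 + V₂ = 2 ⬝ (1+F₂)⁻¹`
  have hU : 1 + V₂ = 2 * ⅟(1 + F₂) := by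
    rw [hV₂]
    calc (1 : R) + (1 - F₂) * ⅟(1 + F₂)
        = (1 + F₂) * ⅟(1 + F₂) + (1 - F₂) * ⅟(1 + F₂) := by rw [mul_invOf_self]
      _ = ((1 + F₂) + (1 - F₂)) * ⅟(1 + F₂) := (add_mul _ _ _).symm
      _ = 2 * ⅟(1 + F₂) := by congr 1; noncomm_ring; simp [two_smul, one_add_one_eq_two]
  haveI iU : Invertible (1 + V₂) := by rw [hU]; exact invertibleMul _ _
  have hUu : IsUnit (1 + V₂) := isUnit_of_invertible _
  -- the inverse of `1 + V₂`
  have hRinv : Ring.inverse (1 + V₂) = (1 + F₂) * ⅟(2 : R) := by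
    rw [Ring.inverse_invertible]
    refine invOf_eq_right_inv ?_
    rw [hU, mul_assoc, invOf_mul_cancel_left, mul_invOf_self]
  -- a cleaner formula for `F₃`
  have hF : F₃ = ⅟(1 + F₂) * ((F₁ + F₂) * (⅟(1 + F₂ * F₁) * (1 + F₂))) := by
    rw [hF₃, hRinv, hU]
    calc 2 * ⅟(1 + F₂) * (F₁ + F₂) * ⅟(1 + F₂ * F₁) * ((1 + F₂) * ⅟(2 : R))
        = 2 * (⅟(1 + F₂) * (F₁ + F₂) * ⅟(1 + F₂ * F₁) * ((1 + F₂) * ⅟(2 : R))) := by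
          simp only [mul_assoc]
      _ = ⅟(1 + F₂) * (F₁ + F₂) * ⅟(1 + F₂ * F₁) * ((1 + F₂) * ⅟(2 : R)) * 2 :=
          h2comm _
      _ = ⅟(1 + F₂) * ((F₁ + F₂) * (⅟(1 + F₂ * F₁) * (1 + F₂))) := by
          simp only [mul_assoc, invOf_mul_self, mul_one]
  -- `1 + F₃ = (1+F₁)(1+F₂F₁)⁻¹(1+F₂)`
  have hP : 1 + F₃ = (1 + F₁) * (⅟(1 + F₂ * F₁) * (1 + F₂)) := by
    refine (isUnit_of_invertible (1 + F₂)).mul_left_cancel ?_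
    rw [hF]
    calc (1 + F₂) * (1 + ⅟(1 + F₂) * ((F₁ + F₂) * (⅟(1 + F₂ * F₁) * (1 + F₂))))
        = (1 + F₂) + (F₁ + F₂) * (⅟(1 + F₂ * F₁) * (1 + F₂)) := by
          rw [mul_add, mul_one, mul_invOf_cancel_left]
      _ = ((1 + F₂ * F₁) + (F₁ + F₂)) * (⅟(1 + F₂ * F₁) * (1 + F₂)) := by
          rw [add_mul (1 + F₂ * F₁) (F₁ + F₂), mul_invOf_cancel_left]
      _ = ((1 + F₂) * (1 + F₁)) * (⅟(1 + F₂ * F₁) * (1 + F₂)) := by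
          congr 1; noncomm_ring
      _ = (1 + F₂) * ((1 + F₁) * (⅟(1 + F₂ * F₁) * (1 + F₂))) := mul_assoc _ _ _
  haveI i3 : Invertible (1 + F₃) := by
    rw [hP]
    haveI : Invertible (⅟(1 + F₂ * F₁) * (1 + F₂)) := invertibleMul _ _
    exact invertibleMul _ _
  -- the inverse of `1 + F₃`
  have hRinv3 : Ring.inverse (1 + F₃) = ⅟(1 + F₂) * ((1 + F₂ * F₁) * ⅟(1 + F₁)) := by
    rw [Ring.inverse_invertible]
    refine invOf_eq_right_inv ?_
    rw [hP]
    simp only [mul_assoc, mul_invOf_cancel_left, invOf_mul_cancel_left, mul_invOf_self]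
  -- `1 - F₃ = (1-F₂)(1+F₂)⁻¹(1-F₁)(1+F₂F₁)⁻¹(1+F₂)`
  have hcom : (1 + F₂) * (1 - F₂) = (1 - F₂) * (1 + F₂) := by noncomm_ring
  have hQ : 1 - F₃ =
      (1 - F₂) * (⅟(1 + F₂) * ((1 - F₁) * (⅟(1 + F₂ * F₁) * (1 + F₂)))) := by
    refine (isUnit_of_invertible (1 + F₂)).mul_left_cancel ?_
    rw [hF]
    calc (1 + F₂) * (1 - ⅟(1 + F₂) * ((F₁ + F₂) * (⅟(1 + F₂ * F₁) * (1 + F₂))))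
        = (1 + F₂) - (F₁ + F₂) * (⅟(1 + F₂ * F₁) * (1 + F₂)) := by
          rw [mul_sub, mul_one, mul_invOf_cancel_left]
      _ = ((1 + F₂ * F₁) - (F₁ + F₂)) * (⅟(1 + F₂ * F₁) * (1 + F₂)) := by
          rw [sub_mul (1 + F₂ * F₁) (F₁ + F₂), mul_invOf_cancel_left]
      _ = ((1 - F₂) * (1 - F₁)) * (⅟(1 + F₂ * F₁) * (1 + F₂)) := by
          congr 1; noncomm_ring
      _ = (1 - F₂) * ((1 + F₂) * (⅟(1 + F₂) * ((1 - F₁) * (⅟(1 + F₂ * F₁) * (1 + F₂))))) := by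
          rw [mul_invOf_cancel_left, mul_assoc]
      _ = (1 + F₂) * ((1 - F₂) * (⅟(1 + F₂) * ((1 - F₁) * (⅟(1 + F₂ * F₁) * (1 + F₂))))) := by
          rw [← mul_assoc (1 - F₂), ← mul_assoc (1 + F₂), hcom]
  refine ⟨hUu, isUnit_of_invertible _, ?_⟩
  rw [hQ, hRinv3, hV₁, hV₂]
  simp only [mul_assoc, mul_invOf_cancel_left, invOf_mul_cancel_left]
end

section
/- Let R be a unital associative ring and let a, b, c be finite index types. Let X be a square matrix over R indexed by a ⊕ b ⊕ c with blocks X_pq for p, q ∈ {a, b, c}. Assume X_cc is invertible, and that the bb-block of the Schur complement of X shortening c, namely Y_bb = X_bb − X_bc X_cc⁻¹ X_cb, is invertible. Then the (b ⊕ c)×(b ⊕ c) block W = [[X_bb, X_bc],[X_cb, X_cc]] is invertible, and the Schur complement of X shortening b ∪ c jointly equals the iterated Schur complement: X_aa − [X_ab, X_ac]·W⁻¹·[X_ba; X_ca] = Y_aa − Y_ab Y_bb⁻¹ Y_ba, where Y_aa = X_aa − X_ac X_cc⁻¹ X_ca, Y_ab = X_ab − X_ac X_cc⁻¹ X_cb,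 and Y_ba = X_ba − X_bc X_cc⁻¹ X_ca. -/
/-!
Block Gaussian elimination with the pivot `X_cc`: unitriangular block matrices `L`, `U` give
`L W U = diag (Y_bb, X_cc)`, so `W` is invertible with `W⁻¹ = U diag (Y_bb⁻¹, X_cc⁻¹) L`.
The same factors turn the border row `[X_ab X_ac]` into `[Y_ab X_ac]` and the border column
`[X_ba; X_ca]` into `[Y_ba; X_ca]`, so the border product splits as
`Y_ab Y_bb⁻¹ Y_ba + X_ac X_cc⁻¹ X_ca`; subtracting it from `X_aa` leaves
`Y_aa - Y_ab Y_bb⁻¹ Y_ba`.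
-/

theorem isUnit_and_inverse_eq_of_mul_mul_eq {M : Type*} [MonoidWithZero M] {p w q d : M}
    [Invertible p] [Invertible q] [Invertible d] (h : p * w * q = d) :
    IsUnit w ∧ Ring.inverse w = q * ⅟d * p := by
  obtain rfl : w = ⅟p * d * ⅟q := by rw [← h]; simp [mul_assoc]
  let := invertibleMul (⅟p) d
  let := invertibleMul (⅟p * d) (⅟q)
  refine ⟨isUnit_of_invertible _, ?_⟩
  rw [Ring.inverse_invertible, invOf_mul, invOf_mul, invOf_invOf, invOf_invOf, mul_assoc]

namespace Matrix

variable {l m n k α : Type*} [Fintype m] [Fintype n] [DecidableEq m] [DecidableEq n] [Ring α]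

instance invertibleFromBlocksOneUpper (X : Matrix m n α) :
    Invertible (fromBlocks 1 X 0 1 : Matrix (m ⊕ n) (m ⊕ n) α) where
  invOf := fromBlocks 1 (-X) 0 1
  invOf_mul_self := by simp [fromBlocks_multiply]
  mul_invOf_self := by simp [fromBlocks_multiply]

instance invertibleFromBlocksOneLower (X : Matrix n m α) :
    Invertible (fromBlocks 1 0 X 1 : Matrix (m ⊕ n) (m ⊕ n) α) where
  invOf := fromBlocks 1 0 (-X) 1
  invOf_mul_self := by simp [fromBlocks_multiply]
  mul_invOf_self := by simp [fromBlocks_multiply]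

instance invertibleFromBlocksDiag (A : Matrix m m α) (D : Matrix n n α) [Invertible A]
    [Invertible D] : Invertible (fromBlocks A 0 0 D) where
  invOf := fromBlocks (⅟A) 0 0 (⅟D)
  invOf_mul_self := by simp [fromBlocks_multiply]
  mul_invOf_self := by simp [fromBlocks_multiply]

theorem invOf_fromBlocks_diag (A : Matrix m m α) (D : Matrix n n α) [Invertible A]
    [Invertible D] : ⅟(fromBlocks A 0 0 D) = fromBlocks (⅟A) 0 0 (⅟D) :=
  rfl

theorem fromBlocks_diagonalize₂₂ (A : Matrix m m α) (B : Matrix m n α) (C : Matrix n m α)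
    (D : Matrix n n α) [Invertible D] :
    fromBlocks 1 (-(B * ⅟D)) 0 1 * fromBlocks A B C D * fromBlocks 1 0 (-(⅟D * C)) 1 =
      fromBlocks (A - B * ⅟D * C) 0 0 D := by
  simp [fromBlocks_multiply, Matrix.mul_assoc, sub_eq_add_neg, Matrix.mul_invOf_cancel_left]

theorem isUnit_fromBlocks_and_inverse_eq_of_invertible₂₂ (A : Matrix m m α) (B : Matrix m n α)
    (C : Matrix n m α) (D : Matrix n n α) [Invertible D] [Invertible (A - B * ⅟D * C)] :
    IsUnit (fromBlocks A B C D) ∧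
      Ring.inverse (fromBlocks A B C D) =
        fromBlocks 1 0 (-(⅟D * C)) 1 * fromBlocks (⅟(A - B * ⅟D * C)) 0 0 (⅟D) *
          fromBlocks 1 (-(B * ⅟D)) 0 1 := by
  rw [← invOf_fromBlocks_diag]
  exact isUnit_and_inverse_eq_of_mul_mul_eq (fromBlocks_diagonalize₂₂ A B C D)

theorem fromCols_mul_inverse_fromBlocks_mul_fromRows (A : Matrix m m α) (B : Matrix m n α)
    (C : Matrix n m α) (D : Matrix n n α) [Invertible D] [Invertible (A - B * ⅟D * C)]
    (P : Matrix l m α) (Q : Matrix l n α) (P' : Matrix m k α) (Q' : Matrix n k α) :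
    fromCols P Q * Ring.inverse (fromBlocks A B C D) * fromRows P' Q' =
      (P - Q * ⅟D * C) * ⅟(A - B * ⅟D * C) * (P' - B * ⅟D * Q') + Q * ⅟D * Q' := by
  -- Without the ascriptions `(1 : Matrix m m α)`, these products would elaborate with
  -- `CStarMatrix`'s default `HMul` instance, and `rw` would not find them in the goal.
  have hcols : fromCols P Q * fromBlocks (1 : Matrix m m α) 0 (-(⅟D * C)) 1 =
      fromCols (P - Q * ⅟D * C) Q := by
    simp [fromCols_mul_fromBlocks, sub_eq_add_neg, Matrix.mul_assoc]
  have hrows : fromBlocks (1 : Matrix m m α) (-(B * ⅟D)) 0 1 * fromRows P' Q' =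
      fromRows (P' - B * ⅟D * Q') Q' := by
    simp [fromBlocks_mul_fromRows, sub_eq_add_neg, Matrix.mul_assoc]
  rw [(isUnit_fromBlocks_and_inverse_eq_of_invertible₂₂ A B C D).2]
  simp only [← Matrix.mul_assoc]
  rw [hcols, Matrix.mul_assoc _ (fromBlocks 1 _ 0 1), hrows]
  simp [fromCols_mul_fromBlocks, fromCols_mul_fromRows]

end Matrix

open Matrix

theorem schur_complement_iterated_general
    {R : Type*} [Ring R]
    {a b c : Type*} [Fintype b] [Fintype c]
    [DecidableEq b] [DecidableEq c]
    (Xaa : Matrix a a R) (Xab : Matrix a b R) (Xac : Matrix a c R)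
    (Xba : Matrix b a R) (Xbb : Matrix b b R) (Xbc : Matrix b c R)
    (Xca : Matrix c a R) (Xcb : Matrix c b R) (Xcc : Matrix c c R)
    [Invertible Xcc]
    (Ybb : Matrix b b R) (hYbb : Ybb = Xbb - Xbc * ⅟Xcc * Xcb)
    [Invertible Ybb]
    (W : Matrix (b ⊕ c) (b ⊕ c) R) (hW : W = Matrix.fromBlocks Xbb Xbc Xcb Xcc)
    (Yaa : Matrix a a R) (hYaa : Yaa = Xaa - Xac * ⅟Xcc * Xca)
    (Yab : Matrix a b R) (hYab : Yab = Xab - Xac * ⅟Xcc * Xcb)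
    (Yba : Matrix b a R) (hYba : Yba = Xba - Xbc * ⅟Xcc * Xca) :
    IsUnit W ∧
      Xaa - Matrix.fromCols Xab Xac * Ring.inverse W * Matrix.fromRows Xba Xca =
        Yaa - Yab * ⅟Ybb * Yba := by
  subst hW hYbb
  refine ⟨(isUnit_fromBlocks_and_inverse_eq_of_invertible₂₂ Xbb Xbc Xcb Xcc).1, ?_⟩
  rw [fromCols_mul_inverse_fromBlocks_mul_fromRows, ← hYab, ← hYba, hYaa]
  abel

/-- successive shortening property of the Schur complement:
shortening the union `b ∪ c` of index sets equals shortening first `c` and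
then `b`. -/
theorem schur_complement_iterated
    {R : Type*} [Ring R]
    {a b c : Type*} [Fintype a] [Fintype b] [Fintype c]
    [DecidableEq a] [DecidableEq b] [DecidableEq c]
    (Xaa : Matrix a a R) (Xab : Matrix a b R) (Xac : Matrix a c R)
    (Xba : Matrix b a R) (Xbb : Matrix b b R) (Xbc : Matrix b c R)
    (Xca : Matrix c a R) (Xcb : Matrix c b R) (Xcc : Matrix c c R)
    [Invertible Xcc]
    (Ybb : Matrix b b R) (hYbb : Ybb = Xbb - Xbc * ⅟Xcc * Xcb)
    [Invertible Ybb]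
    (W : Matrix (b ⊕ c) (b ⊕ c) R) (hW : W = Matrix.fromBlocks Xbb Xbc Xcb Xcc)
    (Yaa : Matrix a a R) (hYaa : Yaa = Xaa - Xac * ⅟Xcc * Xca)
    (Yab : Matrix a b R) (hYab : Yab = Xab - Xac * ⅟Xcc * Xcb)
    (Yba : Matrix b a R) (hYba : Yba = Xba - Xbc * ⅟Xcc * Xca) :
    IsUnit W ∧
      Xaa - Matrix.fromCols Xab Xac * Ring.inverse W * Matrix.fromRows Xba Xca =
        Yaa - Yab * ⅟Ybb * Yba :=
  schur_complement_iterated_general Xaa Xab Xac Xba Xbb Xbc Xca Xcb Xcc Ybb hYbb W hW Yaa hYaa Yab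
    hYab Yba hYba
end

section
/- Let A be a unital complex star algebra, and let e, i be finite index types. Let J_e be a square matrix over A indexed by e with J_e† = J_e and J_e² = I_e, and set J = [[J_e, 0],[0, I_i]], defining the twisted involution X^★ = J X† J on matrices indexed by e ⊕ i and X^☆ = J_e X† J_e on matrices indexed by e. Let V = [[V_ee, V_ei],[V_ie, V_ii]] be ★-unitary (V V^★ = I = V^★ V) and suppose I_i − V_ii is invertible. Then the feedback reduction V^fb = V_ee + V_ei (I_i − V_ii)⁻¹ V_ie is ☆-unitary: V^fb (V^fb)^☆ = I_e = (V^fb)^☆ V^fb. -/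
open Matrix

private lemma key_blocks {A : Type*} [Ring A] {e i : Type*}
    [Fintype e] [Fintype i] [DecidableEq e] [DecidableEq i]
    (Je a a' : Matrix e e A) (b c' : Matrix e i A) (c b' : Matrix i e A)
    (d d' W W' : Matrix i i A)
    (E1 : a * Je * a' = Je - b * b')
    (E2 : a * Je * c' = -(b * d'))
    (E3 : c * Je * a' = -(d * b'))
    (E4 : c * Je * c' = 1 - d * d')
    (hW : W * (1 - d) = 1)
    (hW' : (1 - d') * W' = 1) :
    (a + b * W * c) * Je * (a' + c' * W' * b') = Je := by
  have hWd0 : W * d = W - 1 := by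
    have h2 : W - W * d = 1 := by rw [Matrix.mul_sub, Matrix.mul_one] at hW; exact hW
    rw [← h2]; abel
  have hd'W'0 : d' * W' = W' - 1 := by
    have h2 : W' - d' * W' = 1 := by rw [Matrix.sub_mul, Matrix.one_mul] at hW'; exact hW'
    rw [← h2]; abel
  have hWd : ∀ X : Matrix i e A, W * (d * X) = W * X - X := by
    intro X; rw [← Matrix.mul_assoc, hWd0, Matrix.sub_mul, Matrix.one_mul]
  have hd'W' : ∀ X : Matrix i e A, d' * (W' * X) = W' * X - X := by
    intro X; rw [← Matrix.mul_assoc, hd'W'0, Matrix.sub_mul, Matrix.one_mul]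
  have E1' : a * (Je * a') = Je - b * b' := by rw [← Matrix.mul_assoc, E1]
  have E3' : c * (Je * a') = -(d * b') := by rw [← Matrix.mul_assoc, E3]
  have E2X : ∀ X : Matrix i e A, a * (Je * (c' * X)) = -(b * (d' * X)) := by
    intro X
    rw [show Je * (c' * X) = (Je * c') * X from (Matrix.mul_assoc _ _ _).symm,
      ← Matrix.mul_assoc, ← Matrix.mul_assoc, E2, Matrix.neg_mul, Matrix.mul_assoc]
  have E4X : ∀ X : Matrix i e A, c * (Je * (c' * X)) = X - d * (d' * X) := by
    intro X
    rw [show Je * (c' * X) = (Je * c') * X from (Matrix.mul_assoc _ _ _).symm,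
      ← Matrix.mul_assoc, ← Matrix.mul_assoc, E4, Matrix.sub_mul, Matrix.one_mul,
      Matrix.mul_assoc]
  simp only [Matrix.add_mul, Matrix.mul_add, Matrix.mul_assoc, E1', E2X, E3', E4X, hWd, hd'W',
    Matrix.mul_sub, Matrix.mul_neg, Matrix.neg_mul, Matrix.sub_mul, Matrix.one_mul,
    Matrix.mul_one]
  abel

/-- the feedback reduction
`V^fb = V_ee + V_ei (I_i − V_ii)⁻¹ V_ie` of a ★-unitary Belavkin–Holevo matrix
`V` (with respect to `J = diag(J_e, I_i)`, `J_e† = J_e`, `J_e² = I_e`) is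
☆-unitary with respect to `J_e`. -/
theorem feedback_reduction_star_unitary
    {A : Type*} [Ring A] [StarRing A]
    {e i : Type*} [Fintype e] [Fintype i] [DecidableEq e] [DecidableEq i]
    (Je : Matrix e e A) (hJe : Jeᴴ = Je) (hJe2 : Je * Je = 1)
    (J : Matrix (e ⊕ i) (e ⊕ i) A)
    (hJ : J = Matrix.fromBlocks Je 0 0 1)
    (V : Matrix (e ⊕ i) (e ⊕ i) A)
    (hVstar1 : V * (J * Vᴴ * J) = 1) (hVstar2 : (J * Vᴴ * J) * V = 1)
    [Invertible (1 - V.toBlocks₂₂)]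
    (Vfb : Matrix e e A)
    (hVfb : Vfb = V.toBlocks₁₁ + V.toBlocks₁₂ * ⅟(1 - V.toBlocks₂₂) * V.toBlocks₂₁) :
    Vfb * (Je * Vfbᴴ * Je) = 1 ∧ (Je * Vfbᴴ * Je) * Vfb = 1 := by
  obtain ⟨a, b, c, d, ha, hb, hc, hd⟩ :
      ∃ a b c d, V.toBlocks₁₁ = a ∧ V.toBlocks₁₂ = b ∧ V.toBlocks₂₁ = c ∧ V.toBlocks₂₂ = d :=
    ⟨_, _, _, _, rfl, rfl, rfl, rfl⟩
  have hV : V = fromBlocks a b c d := by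
    rw [← ha, ← hb, ← hc, ← hd]; exact (fromBlocks_toBlocks V).symm
  have hW1 : ⅟(1 - V.toBlocks₂₂) * (1 - d) = 1 := by rw [← hd]; exact invOf_mul_self _
  have hW2 : (1 - d) * ⅟(1 - V.toBlocks₂₂) = 1 := by rw [← hd]; exact mul_invOf_self _
  set W : Matrix i i A := ⅟(1 - V.toBlocks₂₂) with hWdef
  have h1 : V * (J * Vᴴ * J) =
      fromBlocks (a * (Je * aᴴ * Je) + b * (bᴴ * Je)) (a * (Je * cᴴ) + b * dᴴ)
        (c * (Je * aᴴ * Je) + d * (bᴴ * Je)) (c * (Je * cᴴ) + d * dᴴ) := by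
    rw [hJ, hV]
    simp [fromBlocks_conjTranspose, fromBlocks_multiply, Matrix.mul_assoc]
  have h2 : (J * Vᴴ * J) * V =
      fromBlocks (Je * aᴴ * Je * a + Je * cᴴ * c) (Je * aᴴ * Je * b + Je * cᴴ * d)
        (bᴴ * Je * a + dᴴ * c) (bᴴ * Je * b + dᴴ * d) := by
    rw [hJ, hV]
    simp [fromBlocks_conjTranspose, fromBlocks_multiply, Matrix.mul_assoc]
  rw [h1] at hVstar1
  rw [h2] at hVstar2
  rw [show (1 : Matrix (e ⊕ i) (e ⊕ i) A) = fromBlocks 1 0 0 1 from (fromBlocks_one).symm]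
    at hVstar1 hVstar2
  have e11 := congrArg Matrix.toBlocks₁₁ hVstar1
  have e12 := congrArg Matrix.toBlocks₁₂ hVstar1
  have e21 := congrArg Matrix.toBlocks₂₁ hVstar1
  have e22 := congrArg Matrix.toBlocks₂₂ hVstar1
  have f11 := congrArg Matrix.toBlocks₁₁ hVstar2
  have f12 := congrArg Matrix.toBlocks₁₂ hVstar2
  have f21 := congrArg Matrix.toBlocks₂₁ hVstar2
  have f22 := congrArg Matrix.toBlocks₂₂ hVstar2
  simp only [toBlocks_fromBlocks₁₁, toBlocks_fromBlocks₁₂, toBlocks_fromBlocks₂₁,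
    toBlocks_fromBlocks₂₂] at e11 e12 e21 e22 f11 f12 f21 f22
  have E1 : a * Je * aᴴ = Je - b * bᴴ := by
    have h := congrArg (· * Je) e11
    simp only [add_mul, Matrix.mul_assoc, hJe2, Matrix.mul_one, Matrix.one_mul] at h
    rw [Matrix.mul_assoc]; exact eq_sub_of_add_eq h
  have E2 : a * Je * cᴴ = -(b * dᴴ) := by
    rw [← Matrix.mul_assoc] at e12; exact eq_neg_of_add_eq_zero_left e12
  have E3 : c * Je * aᴴ = -(d * bᴴ) := by
    have h := congrArg (· * Je) e21
    simp only [Matrix.add_mul, Matrix.mul_assoc, hJe2, Matrix.mul_one, Matrix.one_mul,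
      Matrix.zero_mul] at h
    rw [Matrix.mul_assoc]; exact eq_neg_of_add_eq_zero_left h
  have E4 : c * Je * cᴴ = 1 - d * dᴴ := by
    rw [← Matrix.mul_assoc] at e22; exact eq_sub_of_add_eq e22
  have F1 : aᴴ * Je * a = Je - cᴴ * c := by
    have h := congrArg (Je * ·) f11
    simp only [Matrix.mul_add, ← Matrix.mul_assoc, hJe2, Matrix.mul_one, Matrix.one_mul] at h
    exact eq_sub_of_add_eq h
  have F2 : aᴴ * Je * b = -(cᴴ * d) := by
    have h := congrArg (Je * ·) f12
    simp only [Matrix.mul_add, ← Matrix.mul_assoc, hJe2, Matrix.mul_one, Matrix.one_mul,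
      Matrix.mul_zero] at h
    exact eq_neg_of_add_eq_zero_left h
  have F3 : bᴴ * Je * a = -(dᴴ * c) := eq_neg_of_add_eq_zero_left f21
  have F4 : bᴴ * Je * b = 1 - dᴴ * d := eq_sub_of_add_eq f22
  have hW1c : Wᴴ * (1 - dᴴ) = 1 := by
    have h := congrArg conjTranspose hW2
    simpa [conjTranspose_mul, sub_eq_add_neg] using h
  have hW2c : (1 - dᴴ) * Wᴴ = 1 := by
    have h := congrArg conjTranspose hW1
    simpa [conjTranspose_mul, sub_eq_add_neg] using h
  rw [ha, hb, hc] at hVfb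
  have hVfbH : Vfbᴴ = aᴴ + cᴴ * Wᴴ * bᴴ := by
    rw [hVfb]; simp [conjTranspose_add, conjTranspose_mul, Matrix.mul_assoc]
  have key1 : Vfb * Je * Vfbᴴ = Je := by
    rw [hVfbH, hVfb]
    exact key_blocks Je a aᴴ b cᴴ c bᴴ d dᴴ W Wᴴ E1 E2 E3 E4 hW1 hW2c
  have key2 : Vfbᴴ * Je * Vfb = Je := by
    rw [hVfbH, hVfb]
    exact key_blocks Je aᴴ a cᴴ b bᴴ c dᴴ d Wᴴ W F1 F2 F3 F4 hW1c hW2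
  constructor
  · calc Vfb * (Je * Vfbᴴ * Je) = (Vfb * Je * Vfbᴴ) * Je := by
          simp only [Matrix.mul_assoc]
      _ = Je * Je := by rw [key1]
      _ = 1 := hJe2
  · calc (Je * Vfbᴴ * Je) * Vfb = Je * (Vfbᴴ * Je * Vfb) := by
          simp only [Matrix.mul_assoc]
      _ = Je * Je := by rw [key2]
      _ = 1 := hJe2
end

section
/- Let R be a unital associative ring and k a finite index type. For an Itô matrix X = [[x₀₀, x₀ₖ],[xₖ₀, xₖₖ]] (with x₀₀ ∈ R, x₀ₖ a row vector, xₖ₀ a column vector, xₖₖ a k×k matrix over R), define the Belavkin–Holevo matrix ℋ(X) as the square matrix indexed by {0̄} ⊕ k ⊕ {0̲} given in block form by [[0, x₀ₖ, x₀₀],[0, xₖₖ, xₖ₀],[0, 0, 0]]. Then for any two Itô matrices X, Y: ℋ(X)·ℋ(Y) = ℋ(X δ̂ Y), where δ̂ = [[0, 0],[0, I_k]], i.e. ℋ(X)ℋ(Y) = ℋ([[x₀ₖ yₖ₀, x₀ₖ yₖₖ],[xₖₖ yₖ₀, xₖₖ yₖₖ]]). Moreover, if R is a star algebra, then ℋ(X†)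 = ℋ(X)^★, where X† is the Itô matrix with (X†)_{αβ} = (X_{βα})*, the involution on ℋ-matrices is M^★ = J M† J, and J is the matrix [[0, 0, 1],[0, I_k, 0],[1, 0, 0]] exchanging the 0̄ and 0̲ labels. -/
set_option maxHeartbeats 1000000


open Matrix

/-- The Belavkin–Holevo matrix `ℋ(X)` of an Itô matrix
`X = [[x₀₀, x₀ₖ],[xₖ₀, xₖₖ]]`, indexed by `{0̄} ⊕ k ⊕ {0̲}`, in block form
`[[0, x₀ₖ, x₀₀],[0, xₖₖ, xₖ₀],[0, 0, 0]]`. -/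
def belavkinHolevo {R : Type*} [Ring R] {k : Type*}
    (x00 : R) (x0k xk0 : k → R) (xkk : Matrix k k R) :
    Matrix (Unit ⊕ k ⊕ Unit) (Unit ⊕ k ⊕ Unit) R :=
  Matrix.of fun p q =>
    match p, q with
    | Sum.inl _, Sum.inl _ => 0
    | Sum.inl _, Sum.inr (Sum.inl j) => x0k j
    | Sum.inl _, Sum.inr (Sum.inr _) => x00
    | Sum.inr (Sum.inl _), Sum.inl _ => 0
    | Sum.inr (Sum.inl j), Sum.inr (Sum.inl l) => xkk j l
    | Sum.inr (Sum.inl j), Sum.inr (Sum.inr _) => xk0 j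
    | Sum.inr (Sum.inr _), _ => 0

/-- The matrix `J = [[0,0,1],[0,I_k,0],[1,0,0]]` exchanging the labels
`0̄` and `0̲` and acting as the identity on `k`. -/
def bhJ (R : Type*) [Ring R] (k : Type*) [DecidableEq k] :
    Matrix (Unit ⊕ k ⊕ Unit) (Unit ⊕ k ⊕ Unit) R :=
  Matrix.of fun p q =>
    match p, q with
    | Sum.inl _, Sum.inr (Sum.inr _) => 1
    | Sum.inr (Sum.inl j), Sum.inr (Sum.inl l) => if j = l then 1 else 0
    | Sum.inr (Sum.inr _), Sum.inl _ => 1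
    | _, _ => 0

/-- structural properties of the Belavkin–Holevo representation:
`ℋ(X)ℋ(Y) = ℋ(X δ̂ Y)` (the Itô correction becomes the ordinary matrix
product), and `ℋ(X†) = ℋ(X)^★ = J ℋ(X)ᴴ J`. -/
theorem belavkinHolevo_mul_and_star
    {R : Type*} [Ring R] [StarRing R]
    {k : Type*} [Fintype k] [DecidableEq k]
    (x00 : R) (x0k xk0 : k → R) (xkk : Matrix k k R)
    (y00 : R) (y0k yk0 : k → R) (ykk : Matrix k k R) :
    belavkinHolevo x00 x0k xk0 xkk * belavkinHolevo y00 y0k yk0 ykk =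
      belavkinHolevo (x0k ⬝ᵥ yk0) (Matrix.vecMul x0k ykk) (xkk.mulVec yk0) (xkk * ykk) ∧
    belavkinHolevo (star x00) (fun j => star (xk0 j)) (fun j => star (x0k j)) xkkᴴ =
      bhJ R k * (belavkinHolevo x00 x0k xk0 xkk)ᴴ * bhJ R k := by
  constructor
  · ext p q
    simp only [Matrix.mul_apply, Fintype.sum_sum_type, Finset.univ_unique, Finset.sum_singleton]
    rcases p with _ | p | _ <;> rcases q with _ | q | _ <;>
      simp [belavkinHolevo, dotProduct, Matrix.vecMul, Matrix.mulVec, Matrix.mul_apply]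
  · ext p q
    simp only [Matrix.mul_apply, Fintype.sum_sum_type, Finset.univ_unique, Finset.sum_singleton]
    rcases p with _ | p | _ <;> rcases q with _ | q | _ <;>
      simp [belavkinHolevo, bhJ, Matrix.conjTranspose_apply, Finset.sum_ite_eq, Finset.sum_ite_eq']
end

section
/- Let α ∈ ℝ and β ∈ ℂ with β ≠ 0, and set d = 1 + (i/2)α + (1/4)|β|². Define S_ee = d⁻¹(1 − (i/2)α − (1/4)|β|²), S_ei = d⁻¹(−iβ), S_ie = d⁻¹(−i·conj(β)), S_ii = d⁻¹(1 + (i/2)α − (1/4)|β|²) (the entries of the Cayley transform of the Stratonovich matrix [[α, β],[conj(β), 0]]). Then d ≠ 0, 1 − S_ii ≠ 0, and the feedback-reduced scattering coefficient satisfies S_ee + S_ei (1 − S_ii)⁻¹ S_ie = −1. -/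
open Complex

section Feedback

variable {K : Type*} [Field K]

lemma one_sub_inv_mul_add_sub {a m d : K} (hd : d ≠ 0) (h : d = 1 + a + m) :
    1 - d⁻¹ * (1 + a - m) = d⁻¹ * (2 * m) := by
  field_simp
  rw [h]
  ring

/-- The loop term `S_ei (1 - S_ii)⁻¹ S_ie` collapses to `-2/d`, and `(1 - a - m)/d - 2/d = -d/d`. -/
lemma inv_mul_add_feedback_eq_neg_one [NeZero (2 : K)] {a m d p q : K} (hd : d ≠ 0) (hm : m ≠ 0)
    (h : d = 1 + a + m) (hpq : p * q = -(4 * m)) :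
    d⁻¹ * (1 - a - m) + d⁻¹ * p * (d⁻¹ * (2 * m))⁻¹ * (d⁻¹ * q) = -1 := by
  have hloop : d⁻¹ * p * (d⁻¹ * (2 * m))⁻¹ * (d⁻¹ * q) = -2 * d⁻¹ := by
    field_simp
    linear_combination hpq
  rw [hloop]
  field_simp
  rw [h]
  ring

end Feedback

lemma neg_I_mul_mul_neg_I_mul_conj (β : ℂ) :
    (-I * β) * (-I * starRingEnd ℂ β) = -(normSq β : ℂ) := by
  linear_combination β * starRingEnd ℂ β * I_sq - mul_conj β

lemma one_add_I_div_two_mul_add_ne_zero (α : ℝ) {t : ℝ} (ht : 0 ≤ t) :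
    (1 : ℂ) + I / 2 * α + 1 / 4 * t ≠ 0 := by
  intro h
  have hre : 1 + t / 4 = 0 := by simpa [div_eq_inv_mul] using congrArg re h
  linarith

/-- for the beam-splitter with Stratonovich matrix
`[[α, β],[β̄, 0]]` (α real, β ≠ 0), the feedback network is well-posed
(`1 − S_ii ≠ 0`) and the feedback-reduced scattering coefficient is
`S_ee + S_ei (1 − S_ii)⁻¹ S_ie = −1`. -/
theorem beamsplitter_feedback_minus_one
    (α : ℝ) (β : ℂ) (hβ : β ≠ 0)
    (d : ℂ) (hd : d = 1 + (Complex.I / 2) * (α : ℂ) + (1 / 4) * (Complex.normSq β : ℂ))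
    (See Sei Sie Sii : ℂ)
    (hSee : See = d⁻¹ * (1 - (Complex.I / 2) * (α : ℂ) - (1 / 4) * (Complex.normSq β : ℂ)))
    (hSei : Sei = d⁻¹ * (-Complex.I * β))
    (hSie : Sie = d⁻¹ * (-Complex.I * (starRingEnd ℂ) β))
    (hSii : Sii = d⁻¹ * (1 + (Complex.I / 2) * (α : ℂ) - (1 / 4) * (Complex.normSq β : ℂ))) :
    d ≠ 0 ∧ 1 - Sii ≠ 0 ∧ See + Sei * (1 - Sii)⁻¹ * Sie = -1 := by
  subst hSee hSei hSie hSii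
  have hm : (1 / 4 : ℂ) * normSq β ≠ 0 := by simpa using hβ
  have hd0 : d ≠ 0 := hd ▸ one_add_I_div_two_mul_add_ne_zero α (normSq_nonneg β)
  rw [one_sub_inv_mul_add_sub hd0 hd]
  refine ⟨hd0, mul_ne_zero (inv_ne_zero hd0) (mul_ne_zero two_ne_zero hm), ?_⟩
  refine inv_mul_add_feedback_eq_neg_one hd0 hm hd ?_
  rw [neg_I_mul_mul_neg_I_mul_conj]
  ring
end
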